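/- arXiv:1408.2206 — 9 statements merged into one kernel-verified Lean document; each statement's English description precedes it below -/
import Mathlib

section
/- Let α be a positive real quadratic irrational (i.e., α is irrational and satisfies a quadratic equation with rational coefficients), and let pₙ/qₙ denote the nth convergent of the regular continued fraction expansion of α. Then ∑_{n≥0} |qₙ·α − pₙ| belongs to ℚ[α]; that is, there exist rational numbers a and b such that ∑_{n≥0} |qₙ·α − pₙ| = a + b·α. -/
/-!
The `n`th error is `|qₙα − pₙ| = {α₀}{α₁}⋯{αₙ}`, where `αₖ` are the complete quotients
(`α₀ = α`, `αₖ₊₁ = 1 / {αₖ}`), since passing from `α` to `α₁` shifts the convergents. Hence the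
error sum `E(x) = ∑ₙ |qₙx − pₙ|` satisfies `E(αᵢ) = s + P · E(αⱼ)` for `i < j`, with `s` and
`P = {αᵢ}⋯{αⱼ₋₁} < 1` rational functions of `α`. By Lagrange's theorem the complete quotients of a
quadratic irrational repeat, `αᵢ = αⱼ`, so `E(αᵢ) = s / (1 - P)`, and with it `E(α)`, lies in the
field `ℚ(α) = ℚ + ℚα`.
-/

open Real

/-- The numerator `pₙ` of the `n`th convergent of the regular continued fraction of `α`. -/
noncomputable def cfNum (α : ℝ) (n : ℕ) : ℝ := (GenContFract.of α).nums n

/-- The denominator `qₙ` of the `n`th convergent of the regular continued fraction of `α`. -/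
noncomputable def cfDen (α : ℝ) (n : ℕ) : ℝ := (GenContFract.of α).dens n

open GenContFract Finset

noncomputable def nextQuot (x : ℝ) : ℝ := (Int.fract x)⁻¹

/-- The complete quotient `xₙ`: `x = [⌊x₀⌋; ⌊x₁⌋, …, ⌊xₙ₋₁⌋, xₙ]`. -/
noncomputable def compQuot (x : ℝ) (n : ℕ) : ℝ := nextQuot^[n] x

section CompleteQuotients

variable {x : ℝ}

theorem irrational_fract (hx : Irrational x) : Irrational (Int.fract x) :=
  hx.sub_intCast ⌊x⌋

theorem fract_pos_of_irrational (hx : Irrational x) : 0 < Int.fract x :=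
  (Int.fract_nonneg x).lt_of_ne (irrational_fract hx).ne_zero.symm

theorem irrational_nextQuot (hx : Irrational x) : Irrational (nextQuot x) :=
  (irrational_fract hx).inv

theorem one_lt_nextQuot (hx : Irrational x) : 1 < nextQuot x :=
  (one_lt_inv₀ (fract_pos_of_irrational hx)).mpr (Int.fract_lt_one x)

theorem compQuot_zero (x : ℝ) : compQuot x 0 = x := rfl

theorem compQuot_succ (x : ℝ) (n : ℕ) : compQuot x (n + 1) = nextQuot (compQuot x n) :=
  Function.iterate_succ_apply' _ _ _

theorem compQuot_succ' (x : ℝ) (n : ℕ) : compQuot x (n + 1) = compQuot (nextQuot x) n :=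
  Function.iterate_succ_apply _ _ _

theorem compQuot_add (x : ℝ) (m n : ℕ) : compQuot (compQuot x m) n = compQuot x (m + n) := by
  rw [compQuot, compQuot, compQuot, add_comm, Function.iterate_add_apply]

theorem irrational_compQuot (hx : Irrational x) (n : ℕ) : Irrational (compQuot x n) := by
  induction n with
  | zero => exact hx
  | succ n ih => rw [compQuot_succ]; exact irrational_nextQuot ih

theorem one_lt_compQuot_succ (hx : Irrational x) (n : ℕ) : 1 < compQuot x (n + 1) := by
  rw [compQuot_succ]; exact one_lt_nextQuot (irrational_compQuot hx n)

theorem one_le_floor_compQuot_succ (hx : Irrational x) (n : ℕ) :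
    1 ≤ ⌊compQuot x (n + 1)⌋ :=
  Int.le_floor.mpr (by exact_mod_cast (one_lt_compQuot_succ hx n).le)

end CompleteQuotients

section Convergents

variable {v : ℝ}

theorem exists_of_s_get?_eq_of_irrational (hv : Irrational v) (n : ℕ) :
    ∃ b : ℝ, (GenContFract.of v).s.get? n = some ⟨1, b⟩ := by
  have hnt : ¬ (GenContFract.of v).TerminatedAt n := fun h => by
    obtain ⟨q, rfl⟩ := (terminates_iff_rat v).mp ⟨n, h⟩
    exact hv ⟨q, rfl⟩
  obtain ⟨gp, hgp⟩ := Option.ne_none_iff_exists'.mp hnt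
  refine ⟨gp.b, ?_⟩
  rw [hgp, ← of_partNum_eq_one (partNum_eq_s_a hgp)]

theorem contsAux_of_succ_of_irrational (hv : Irrational v) (n : ℕ) :
    (GenContFract.of v).contsAux (n + 1) =
      ⟨⌊v⌋ * ((GenContFract.of (nextQuot v)).contsAux n).a +
          ((GenContFract.of (nextQuot v)).contsAux n).b,
        ((GenContFract.of (nextQuot v)).contsAux n).a⟩ := by
  induction n using Nat.twoStepInduction with
  | zero => simp
  | one =>
    rw [second_contAux_eq (of_s_head (irrational_fract hv).ne_zero), first_contAux_eq_h_one,
      of_h_eq_floor, of_h_eq_floor, nextQuot]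
    simp [mul_comm]
  | more n ih₁ ih₂ =>
    obtain ⟨b, hb⟩ := exists_of_s_get?_eq_of_irrational (irrational_nextQuot hv) n
    rw [contsAux_recurrence (by rw [of_s_succ]; exact hb) ih₁ ih₂,
      contsAux_recurrence hb rfl rfl]
    simp only [Pair.mk.injEq]
    exact ⟨by ring, trivial⟩

theorem cfNum_succ_of_irrational (hv : Irrational v) (n : ℕ) :
    cfNum v (n + 1) = ⌊v⌋ * cfNum (nextQuot v) n + cfDen (nextQuot v) n := by
  simp [cfNum, cfDen, num_eq_conts_a, den_eq_conts_b, nth_cont_eq_succ_nth_contAux,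
    contsAux_of_succ_of_irrational hv (n + 1)]

theorem cfDen_succ_of_irrational (hv : Irrational v) (n : ℕ) :
    cfDen v (n + 1) = cfNum (nextQuot v) n := by
  simp [cfNum, cfDen, num_eq_conts_a, den_eq_conts_b, nth_cont_eq_succ_nth_contAux,
    contsAux_of_succ_of_irrational hv (n + 1)]

end Convergents

section ErrorSum

noncomputable def cfErr (v : ℝ) (n : ℕ) : ℝ := |cfDen v n * v - cfNum v n|

variable {v : ℝ}

theorem cfErr_zero (v : ℝ) : cfErr v 0 = Int.fract v := by
  rw [cfErr, cfDen, cfNum, zeroth_den_eq_one, zeroth_num_eq_h, of_h_eq_floor, one_mul]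
  exact abs_of_nonneg (Int.fract_nonneg v)

theorem cfErr_succ (hv : Irrational v) (n : ℕ) :
    cfErr v (n + 1) = Int.fract v * cfErr (nextQuot v) n := by
  have key : cfDen v (n + 1) * v - cfNum v (n + 1) =
      -(Int.fract v * (cfDen (nextQuot v) n * nextQuot v - cfNum (nextQuot v) n)) := by
    have hfract : Int.fract v * nextQuot v = 1 := mul_inv_cancel₀ (irrational_fract hv).ne_zero
    rw [cfNum_succ_of_irrational hv, cfDen_succ_of_irrational hv]
    linear_combination cfDen (nextQuot v) n * hfract - cfNum (nextQuot v) n * Int.floor_add_fract v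
  rw [cfErr, cfErr, key, abs_neg, abs_mul, abs_of_nonneg (Int.fract_nonneg v)]

theorem cfErr_add (hv : Irrational v) (m n : ℕ) :
    cfErr v (m + n) = (∏ k ∈ range m, Int.fract (compQuot v k)) * cfErr (compQuot v m) n := by
  induction m generalizing v with
  | zero => simp [compQuot_zero]
  | succ m ih =>
    rw [add_right_comm, cfErr_succ hv, ih (irrational_nextQuot hv), prod_range_succ',
      compQuot_succ']
    simp only [compQuot_succ', compQuot_zero]
    ring

theorem fract_mul_fract_nextQuot_le (x : ℝ) : Int.fract x * Int.fract (nextQuot x) ≤ 1 / 2 := by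
  set t := Int.fract x
  have ht₀ : 0 ≤ t := Int.fract_nonneg x
  rcases le_total t (1 / 2) with ht | ht
  · nlinarith [Int.fract_lt_one (nextQuot x), Int.fract_nonneg (nextQuot x)]
  · have hinv : 1 ≤ t⁻¹ := (one_le_inv₀ (by linarith)).mpr (Int.fract_lt_one x).le
    have hfloor : (1 : ℝ) ≤ ⌊t⁻¹⌋ := by
      exact_mod_cast Int.le_floor.mpr (by exact_mod_cast hinv)
    have : t * Int.fract t⁻¹ = 1 - t * ⌊t⁻¹⌋ := by
      rw [Int.fract, mul_sub, mul_inv_cancel₀ (by linarith)]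
    rw [nextQuot, this]
    nlinarith

theorem cfErr_le (hv : Irrational v) (n : ℕ) : cfErr v n ≤ (1 / 2) ^ (n / 2) := by
  induction n using Nat.twoStepInduction generalizing v with
  | zero => simpa [cfErr_zero] using (Int.fract_lt_one v).le
  | one =>
    rw [cfErr_succ hv, cfErr_zero]
    linarith [fract_mul_fract_nextQuot_le v]
  | more n ih _ =>
    have hv₂ := irrational_compQuot hv 2
    rw [add_comm, cfErr_add hv, show (2 + n) / 2 = n / 2 + 1 by omega, pow_succ']
    simp only [prod_range_succ, range_one, prod_singleton, compQuot_zero, compQuot_succ]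
    exact mul_le_mul (fract_mul_fract_nextQuot_le v) (ih hv₂) (abs_nonneg _) (by norm_num)

theorem summable_cfErr (hv : Irrational v) : Summable (cfErr v) := by
  have hbound (k n : ℕ) (hn : n / 2 = k) : cfErr v n ≤ (1 / 2) ^ k := hn ▸ cfErr_le hv n
  refine Summable.even_add_odd ?_ ?_ <;>
    refine Summable.of_nonneg_of_le (fun _ => abs_nonneg _) (fun k => hbound k _ ?_)
      summable_geometric_two <;> omega

theorem tsum_cfErr_eq (hv : Irrational v) (m : ℕ) :
    ∑' n, cfErr v n = ∑ n ∈ range m, cfErr v n +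
      (∏ k ∈ range m, Int.fract (compQuot v k)) * ∑' n, cfErr (compQuot v m) n := by
  simp_rw [← (summable_cfErr hv).sum_add_tsum_nat_add m, add_comm _ m, cfErr_add hv,
    tsum_mul_left]

end ErrorSum

section SubfieldMembership

variable {S : Type*} [SetLike S ℝ] [SubfieldClass S ℝ] {K : S} {x : ℝ}

theorem compQuot_mem (hx : x ∈ K) (n : ℕ) : compQuot x n ∈ K := by
  induction n with
  | zero => exact hx
  | succ n ih =>
    rw [compQuot_succ, nextQuot, Int.fract]
    exact inv_mem (sub_mem ih (intCast_mem K _))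

theorem prod_fract_compQuot_mem (hx : x ∈ K) (m : ℕ) :
    ∏ k ∈ range m, Int.fract (compQuot x k) ∈ K :=
  prod_mem fun k _ => sub_mem (compQuot_mem hx k) (intCast_mem K _)

theorem cfErr_mem (hx : Irrational x) (hxK : x ∈ K) (n : ℕ) : cfErr x n ∈ K := by
  rw [← add_zero n, cfErr_add hx, cfErr_zero]
  exact mul_mem (prod_fract_compQuot_mem hxK n) (sub_mem (compQuot_mem hxK n) (intCast_mem K _))

theorem prod_fract_compQuot_lt_one {m : ℕ} (hm : 0 < m) :
    ∏ k ∈ range m, Int.fract (compQuot x k) < 1 := by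
  obtain ⟨m, rfl⟩ := Nat.exists_eq_add_of_lt hm
  rw [zero_add, prod_range_succ', compQuot_zero]
  have hle : ∏ k ∈ range m, Int.fract (compQuot x (k + 1)) ≤ 1 :=
    prod_le_one (fun _ _ => Int.fract_nonneg _) (fun _ _ => (Int.fract_lt_one _).le)
  nlinarith [Int.fract_lt_one x, Int.fract_nonneg x]

theorem tsum_cfErr_mem_of_compQuot (hx : Irrational x) (hxK : x ∈ K) (m : ℕ)
    (h : ∑' n, cfErr (compQuot x m) n ∈ K) : ∑' n, cfErr x n ∈ K := by
  rw [tsum_cfErr_eq hx m]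
  exact add_mem (sum_mem fun n _ => cfErr_mem hx hxK n) (mul_mem (prod_fract_compQuot_mem hxK m) h)

theorem tsum_cfErr_mem_of_periodic (hx : Irrational x) (hxK : x ∈ K) {m : ℕ} (hm : 0 < m)
    (h : compQuot x m = x) : ∑' n, cfErr x n ∈ K := by
  have hP := prod_fract_compQuot_lt_one (x := x) hm
  have heq := tsum_cfErr_eq hx m
  rw [h] at heq
  have hsolve : ∑' n, cfErr x n = (∑ n ∈ range m, cfErr x n) /
      (1 - ∏ k ∈ range m, Int.fract (compQuot x k)) := by
    rw [eq_div_iff (by linarith)]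
    linear_combination heq
  rw [hsolve]
  exact div_mem (sum_mem fun n _ => cfErr_mem hx hxK n)
    (sub_mem (one_mem K) (prod_fract_compQuot_mem hxK m))

theorem tsum_cfErr_mem_of_compQuot_eq (hx : Irrational x) (hxK : x ∈ K) {i j : ℕ} (hij : i < j)
    (h : compQuot x i = compQuot x j) : ∑' n, cfErr x n ∈ K := by
  refine tsum_cfErr_mem_of_compQuot hx hxK i
    (tsum_cfErr_mem_of_periodic (irrational_compQuot hx i) (compQuot_mem hxK i)
      (Nat.sub_pos_of_lt hij) ?_)
  rw [compQuot_add, Nat.add_sub_cancel' hij.le, h]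

end SubfieldMembership

section FloorsDetermineOrbit

theorem nextQuot_ne_and_inv_abs_sub_le {x y : ℝ} (hx : Irrational x) (hy : Irrational y)
    (hfloor : ⌊x⌋ = ⌊y⌋) (hne : x ≠ y) :
    nextQuot x ≠ nextQuot y ∧ |nextQuot x - nextQuot y|⁻¹ ≤ |x - y|⁻¹ - 1 := by
  set f := Int.fract x
  set g := Int.fract y
  have hf₀ : 0 < f := fract_pos_of_irrational hx
  have hg₀ : 0 < g := fract_pos_of_irrational hy
  have hf₁ : f < 1 := Int.fract_lt_one x
  have hg₁ : g < 1 := Int.fract_lt_one y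
  have hsub : x - y = f - g := by simp only [f, g, Int.fract, hfloor]; ring
  have hfg : f - g ≠ 0 := hsub ▸ sub_ne_zero.mpr hne
  refine ⟨fun h => hfg (sub_eq_zero.mpr (inv_injective h)), ?_⟩
  have hnext : |nextQuot x - nextQuot y|⁻¹ = f * g / |f - g| := by
    rw [nextQuot, nextQuot, inv_sub_inv hf₀.ne' hg₀.ne', abs_div, abs_sub_comm,
      abs_of_pos (mul_pos hf₀ hg₀), inv_div]
  rw [hnext, hsub, le_sub_iff_add_le, div_add_one (abs_ne_zero.mpr hfg), ← one_div,
    div_le_div_iff_of_pos_right (abs_pos.mpr hfg)]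
  rcases le_total f g with h | h
  · rw [abs_of_nonpos (by linarith)]; nlinarith
  · rw [abs_of_nonneg (by linarith)]; nlinarith

/-- Two distinct real numbers with the same partial quotients would have complete quotients
whose distances `δₙ` satisfy `δₙ₊₁⁻¹ ≤ δₙ⁻¹ - 1`, which is impossible. -/
theorem eq_of_floor_compQuot_eq {x y : ℝ} (hx : Irrational x) (hy : Irrational y)
    (h : ∀ n, ⌊compQuot x n⌋ = ⌊compQuot y n⌋) : x = y := by
  by_contra hne
  have key : ∀ n : ℕ, compQuot x n ≠ compQuot y n ∧
      |compQuot x n - compQuot y n|⁻¹ ≤ |x - y|⁻¹ - n := by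
    intro n
    induction n with
    | zero => exact ⟨hne, by simp [compQuot_zero]⟩
    | succ n ih =>
      obtain ⟨hne', hstep⟩ := nextQuot_ne_and_inv_abs_sub_le (irrational_compQuot hx n)
        (irrational_compQuot hy n) (h n) ih.1
      rw [compQuot_succ, compQuot_succ]
      exact ⟨hne', by push_cast; linarith [ih.2]⟩
  obtain ⟨n, hn⟩ := exists_nat_gt |x - y|⁻¹
  linarith [(key n).2, inv_nonneg.mpr (abs_nonneg (compQuot x n - compQuot y n))]

end FloorsDetermineOrbit

structure IntQuad where
  a : ℤ
  b : ℤ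
  c : ℤ

namespace IntQuad

variable {Q : IntQuad} {v w : ℝ}

def eval (Q : IntQuad) (x : ℝ) : ℝ := Q.a * x ^ 2 + Q.b * x + Q.c

def disc (Q : IntQuad) : ℤ := Q.b ^ 2 - 4 * Q.a * Q.c

/-- The equation obtained from `Q` by substituting `x = m + 1 / y` and clearing denominators. -/
def shift (Q : IntQuad) (m : ℤ) : IntQuad :=
  ⟨Q.a * m ^ 2 + Q.b * m + Q.c, 2 * Q.a * m + Q.b, Q.a⟩

theorem disc_shift (Q : IntQuad) (m : ℤ) : (Q.shift m).disc = Q.disc := by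
  simp only [disc, shift]; ring

/-- `Q.a X² + Q.b X + Q.c = Q.a (X - v) (X - w)` with `Q.a ≠ 0`. -/
def HasRoots (Q : IntQuad) (v w : ℝ) : Prop :=
  Q.a ≠ 0 ∧ Q.a * (v + w) = -Q.b ∧ Q.a * (v * w) = Q.c

theorem hasRoots_of_eval_eq_zero (ha : Q.a ≠ 0) (hv : Q.eval v = 0) :
    Q.HasRoots v (-Q.b / Q.a - v) := by
  have ha' : (Q.a : ℝ) ≠ 0 := by exact_mod_cast ha
  refine ⟨ha, by field_simp; ring, ?_⟩
  rw [eval] at hv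
  field_simp
  linear_combination -hv

theorem HasRoots.eval_eq (h : Q.HasRoots v w) (x : ℝ) : Q.eval x = Q.a * (x - v) * (x - w) := by
  rw [eval]
  linear_combination x * h.2.1 - h.2.2

theorem HasRoots.eval_left (h : Q.HasRoots v w) : Q.eval v = 0 := by simp [h.eval_eq]

theorem HasRoots.irrational_right (h : Q.HasRoots v w) (hv : Irrational v) : Irrational w := by
  have ha : (Q.a : ℝ) ≠ 0 := by exact_mod_cast h.1
  have hw : w = ((-Q.b / Q.a : ℚ) : ℝ) - v := by
    push_cast; field_simp; linear_combination h.2.1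
  rw [hw]
  exact hv.ratCast_sub _

theorem HasRoots.ne (h : Q.HasRoots v w) (hv : Irrational v) : v ≠ w := by
  rintro rfl
  have ha : (Q.a : ℝ) ≠ 0 := by exact_mod_cast h.1
  refine hv ⟨-Q.b / (2 * Q.a), ?_⟩
  push_cast; field_simp; linear_combination -h.2.1

theorem HasRoots.shift (h : Q.HasRoots v w) {m : ℤ} (hv : v ≠ m) (hw : w ≠ m) :
    (Q.shift m).HasRoots (v - m)⁻¹ (w - m)⁻¹ := by
  have hv' : v - m ≠ 0 := sub_ne_zero.mpr hv
  have hw' : w - m ≠ 0 := sub_ne_zero.mpr hw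
  have ha : (Q.a : ℝ) ≠ 0 := by exact_mod_cast h.1
  have ha' : ((Q.shift m).a : ℝ) = Q.a * (v - m) * (w - m) := by
    have := h.eval_eq m
    simp only [eval] at this
    simp only [IntQuad.shift]; push_cast; linear_combination this
  refine ⟨by exact_mod_cast ha' ▸ mul_ne_zero (mul_ne_zero ha hv') hw', ?_, ?_⟩
  · rw [ha']; simp only [IntQuad.shift]; push_cast; field_simp; linear_combination h.2.1
  · rw [ha']; simp only [IntQuad.shift]; field_simp

theorem HasRoots.disc_eq (h : Q.HasRoots v w) : (Q.disc : ℝ) = Q.a ^ 2 * (v - w) ^ 2 := by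
  rw [disc]; push_cast
  linear_combination ((Q.b : ℝ) - Q.a * (v + w)) * h.2.1 + 4 * Q.a * h.2.2

theorem HasRoots.sq_a_lt_disc (h : Q.HasRoots v w) (hvw : 1 < v - w) : Q.a ^ 2 < Q.disc := by
  have ha : (0 : ℝ) < (Q.a : ℝ) ^ 2 := by have := h.1; positivity
  have hsq : 1 < (v - w) ^ 2 := by nlinarith
  have : (Q.a : ℝ) ^ 2 < Q.disc := by rw [h.disc_eq]; nlinarith [mul_lt_mul_of_pos_left hsq ha]
  exact_mod_cast this

theorem sq_le_five_disc (ha : Q.a ^ 2 < Q.disc) (hc : Q.c ^ 2 < Q.disc) :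
    Q.a ^ 2 ≤ 5 * Q.disc ∧ Q.b ^ 2 ≤ 5 * Q.disc ∧ Q.c ^ 2 ≤ 5 * Q.disc := by
  rw [disc] at *
  exact ⟨by nlinarith, by nlinarith [sq_nonneg (Q.a + Q.c)], by nlinarith⟩

theorem finite_setOf_sq_le (N : ℤ) :
    {Q : IntQuad | Q.a ^ 2 ≤ N ∧ Q.b ^ 2 ≤ N ∧ Q.c ^ 2 ≤ N}.Finite := by
  have hbox (z : ℤ) (hz : z ^ 2 ≤ N) : z ∈ Set.Icc (-N) N :=
    ⟨by nlinarith [Int.le_self_sq (-z)], by nlinarith [Int.le_self_sq z]⟩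
  have hfin := (Set.finite_Icc (-N) N).prod ((Set.finite_Icc (-N) N).prod (Set.finite_Icc (-N) N))
  refine (hfin.image fun t : ℤ × ℤ × ℤ => (⟨t.1, t.2.1, t.2.2⟩ : IntQuad)).subset ?_
  rintro Q ⟨ha, hb, hc⟩
  exact ⟨(Q.a, Q.b, Q.c), ⟨hbox _ ha, hbox _ hb, hbox _ hc⟩, rfl⟩

theorem exists_eval_eq_zero {α : ℝ} {a b c : ℚ} (ha : a ≠ 0)
    (h : (a : ℝ) * α ^ 2 + b * α + c = 0) : ∃ Q : IntQuad, Q.a ≠ 0 ∧ Q.eval α = 0 := by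
  have hnum (q : ℚ) : (q.num : ℝ) = q * q.den := by exact_mod_cast (Rat.mul_den_eq_num q).symm
  refine ⟨⟨a.num * b.den * c.den, b.num * a.den * c.den, c.num * a.den * b.den⟩,
    by simp [Rat.num_ne_zero.mpr ha], ?_⟩
  simp only [eval]
  push_cast
  rw [hnum, hnum, hnum]
  linear_combination ((a.den : ℝ) * b.den * c.den) * h

end IntQuad

section Lagrange

open IntQuad

noncomputable def quadSeq (α : ℝ) (Q : IntQuad) : ℕ → IntQuad
  | 0 => Q
  | n + 1 => (quadSeq α Q n).shift ⌊compQuot α n⌋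

/-- Started at the conjugate of `α`, the conjugates of the complete quotients of `α`. -/
noncomputable def conjSeq (α w : ℝ) : ℕ → ℝ
  | 0 => w
  | n + 1 => (conjSeq α w n - ⌊compQuot α n⌋)⁻¹

variable {α w : ℝ} {Q : IntQuad}

theorem disc_quadSeq (α : ℝ) (Q : IntQuad) (n : ℕ) : (quadSeq α Q n).disc = Q.disc := by
  induction n with
  | zero => rfl
  | succ n ih => rw [quadSeq, disc_shift, ih]

theorem hasRoots_quadSeq (hα : Irrational α) (h : Q.HasRoots α w) (n : ℕ) :
    (quadSeq α Q n).HasRoots (compQuot α n) (conjSeq α w n) := by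
  induction n with
  | zero => exact h
  | succ n ih =>
    rw [quadSeq, conjSeq, compQuot_succ]
    exact ih.shift (m := ⌊compQuot α n⌋) ((irrational_compQuot hα n).ne_int _)
      ((ih.irrational_right (irrational_compQuot hα n)).ne_int _)

theorem irrational_conjSeq (hα : Irrational α) (h : Q.HasRoots α w) (n : ℕ) :
    Irrational (conjSeq α w n) :=
  (hasRoots_quadSeq hα h n).irrational_right (irrational_compQuot hα n)

theorem inv_sub_mem_Ioo_of_neg {x : ℝ} {m : ℤ} (hx : x < 0) (hm : 1 ≤ m) :
    (x - m)⁻¹ ∈ Set.Ioo (-1) 0 := by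
  have hm' : (1 : ℝ) ≤ m := by exact_mod_cast hm
  have hneg : x - m < 0 := by linarith
  have hinv := mul_inv_cancel₀ hneg.ne
  exact ⟨by nlinarith [inv_lt_zero.mpr hneg], inv_lt_zero.mpr hneg⟩

/-- If the conjugates stayed positive they would share all partial quotients with `α`. -/
theorem exists_conjSeq_neg (hα : Irrational α) (h : Q.HasRoots α w) :
    ∃ n, conjSeq α w (n + 1) < 0 := by
  by_contra! hpos
  have hpos' (n : ℕ) : 0 < conjSeq α w (n + 1) :=
    (hpos n).lt_of_ne (irrational_conjSeq hα h (n + 1)).ne_zero.symm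
  have hfloor (n : ℕ) : ⌊conjSeq α w (n + 1)⌋ = ⌊compQuot α (n + 1)⌋ := by
    set m := ⌊compQuot α (n + 1)⌋
    rw [Int.floor_eq_iff]
    have hgt : (m : ℝ) < conjSeq α w (n + 1) := by
      have := hpos' (n + 1)
      rw [conjSeq, inv_pos, sub_pos] at this
      exact this
    refine ⟨hgt.le, not_le.mp fun hge => ?_⟩
    have hle : conjSeq α w (n + 2) ≤ 1 := inv_le_one_of_one_le₀ (by linarith)
    have hm : (1 : ℝ) ≤ ⌊compQuot α (n + 2)⌋ := by
      exact_mod_cast one_le_floor_compQuot_succ hα (n + 1)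
    have := hpos' (n + 2)
    rw [conjSeq, inv_pos, sub_pos] at this
    linarith
  have hcomp (k : ℕ) : conjSeq α w (k + 1) = compQuot (conjSeq α w 1) k := by
    induction k with
    | zero => rfl
    | succ k ih => rw [compQuot_succ, ← ih, nextQuot, Int.fract, hfloor, conjSeq]
  have heq : conjSeq α w 1 = compQuot α 1 :=
    eq_of_floor_compQuot_eq (irrational_conjSeq hα h 1) (irrational_compQuot hα 1) fun k => by
      rw [← hcomp, compQuot_add, hfloor, add_comm]
  exact (hasRoots_quadSeq hα h 1).ne (irrational_compQuot hα 1) heq.symm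

theorem exists_conjSeq_mem_Ioo (hα : Irrational α) (h : Q.HasRoots α w) :
    ∃ M, ∀ k, conjSeq α w (M + k + 1) ∈ Set.Ioo (-1) 0 := by
  obtain ⟨N, hN⟩ := exists_conjSeq_neg hα h
  have hstep (k : ℕ) (hk : conjSeq α w (N + 1 + k) < 0) :
      conjSeq α w (N + 1 + k + 1) ∈ Set.Ioo (-1) 0 :=
    inv_sub_mem_Ioo_of_neg hk
      (by simpa [add_right_comm] using one_le_floor_compQuot_succ hα (N + k))
  have hneg (k : ℕ) : conjSeq α w (N + 1 + k) < 0 := by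
    induction k with
    | zero => exact hN
    | succ k ih => exact (hstep k ih).2
  exact ⟨N + 1, fun k => hstep k (hneg k)⟩

/-- Lagrange: the complete quotients of a quadratic irrational repeat. Once the conjugates lie in
`(-1, 0)`, the discriminant bounds the coefficients of `quadSeq`, so some equation recurs, and
`α`'s complete quotient is then its unique positive root. -/
theorem exists_compQuot_eq (hα : Irrational α) (h : Q.HasRoots α w) :
    ∃ i j, i < j ∧ compQuot α i = compQuot α j := by
  obtain ⟨M, hM⟩ := exists_conjSeq_mem_Ioo hα h
  have hroots (n : ℕ) := hasRoots_quadSeq hα h n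
  have hsq_a (k : ℕ) : (quadSeq α Q (M + k + 1)).a ^ 2 < Q.disc := by
    rw [← disc_quadSeq α Q (M + k + 1)]
    refine (hroots _).sq_a_lt_disc ?_
    linarith [(hM k).2, one_lt_compQuot_succ hα (M + k)]
  have hbounded (k : ℕ) : quadSeq α Q (M + k + 2) ∈
      {Q' : IntQuad | Q'.a ^ 2 ≤ 5 * Q.disc ∧ Q'.b ^ 2 ≤ 5 * Q.disc ∧
        Q'.c ^ 2 ≤ 5 * Q.disc} := by
    have hdisc := disc_quadSeq α Q (M + k + 2)
    rw [← hdisc]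
    exact sq_le_five_disc (hdisc ▸ hsq_a (k + 1)) (hdisc ▸ hsq_a k)
  obtain ⟨k₁, k₂, hlt, hQ⟩ := (finite_setOf_sq_le _).exists_lt_map_eq_of_forall_mem hbounded
  refine ⟨M + k₁ + 2, M + k₂ + 2, by omega, ?_⟩
  have hzero := (hroots (M + k₁ + 2)).eval_eq (compQuot α (M + k₂ + 2))
  rw [hQ, (hroots (M + k₂ + 2)).eval_left] at hzero
  have hv : 0 < compQuot α (M + k₂ + 2) := by linarith [one_lt_compQuot_succ hα (M + k₂ + 1)]
  have hw : conjSeq α w (M + k₁ + 2) < 0 := (hM (k₁ + 1)).2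
  rcases mul_eq_zero.mp hzero.symm with h₁ | h₂
  · have := (mul_eq_zero.mp h₁).resolve_left (by exact_mod_cast (hroots _).1)
    linarith
  · linarith

end Lagrange

open Polynomial IntermediateField in
theorem exists_eq_add_mul_of_mem_adjoin_of_quadratic {α x : ℝ} {a b c : ℚ} (ha : a ≠ 0)
    (hα : (a : ℝ) * α ^ 2 + b * α + c = 0) (hx : x ∈ ℚ⟮α⟯) :
    ∃ r s : ℚ, x = r + s * α := by
  set p : ℚ[X] := C a * X ^ 2 + C b * X + C c
  have hp : p ≠ 0 := fun h => by simpa [p, ha] using congrArg (coeff · 2) h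
  have hpα : aeval α p = 0 := by simpa [p] using hα
  have hdeg : (minpoly ℚ α).natDegree ≤ 2 := by
    have hpdeg : p.degree = 2 := by simp only [p]; compute_degree!
    exact natDegree_le_of_degree_le ((minpoly.degree_le_of_ne_zero ℚ α hp hpα).trans hpdeg.le)
  have hint : IsIntegral ℚ α := IsAlgebraic.isIntegral ⟨p, hp, hpα⟩
  obtain ⟨f, hf, hfx⟩ := (adjoin.powerBasis hint).exists_eq_aeval ⟨x, hx⟩
  rw [adjoin.powerBasis_dim] at hf
  obtain ⟨s, r, rfl⟩ := exists_eq_X_add_C_of_natDegree_le_one (show f.natDegree ≤ 1 by omega)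
  refine ⟨r, s, ?_⟩
  simpa [add_comm] using congrArg Subtype.val hfx

theorem errorSum_quadratic_mem_Q_alpha_general (α : ℝ) (hirr : Irrational α)
    (hquad : ∃ a b c : ℚ, a ≠ 0 ∧ (a : ℝ) * α ^ 2 + (b : ℝ) * α + (c : ℝ) = 0) :
    ∃ a b : ℚ, (∑' n : ℕ, |cfDen α n * α - cfNum α n|) = (a : ℝ) + (b : ℝ) * α := by
  obtain ⟨a, b, c, ha, habc⟩ := hquad
  obtain ⟨Q, hQa, hQα⟩ := IntQuad.exists_eval_eq_zero ha habc
  obtain ⟨i, j, hij, hrepeat⟩ :=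
    exists_compQuot_eq hirr (IntQuad.hasRoots_of_eval_eq_zero hQa hQα)
  have hmem :=
    tsum_cfErr_mem_of_compQuot_eq hirr (IntermediateField.mem_adjoin_simple_self ℚ α) hij hrepeat
  exact exists_eq_add_mul_of_mem_adjoin_of_quadratic ha habc hmem

theorem errorSum_quadratic_mem_Q_alpha (α : ℝ) (hα : 0 < α) (hirr : Irrational α)
    (hquad : ∃ a b c : ℚ, a ≠ 0 ∧ (a : ℝ) * α ^ 2 + (b : ℝ) * α + (c : ℝ) = 0) :
    ∃ a b : ℚ, (∑' n : ℕ, |cfDen α n * α - cfNum α n|) = (a : ℝ) + (b : ℝ) * α :=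
  errorSum_quadratic_mem_Q_alpha_general α hirr hquad
end

section
/- Let pₙ/qₙ denote the nth convergent of the regular continued fraction expansion of √7. Then ∑_{n≥0} |qₙ·√7 − pₙ| = (7 + 5·√7)/14. -/
open Real

/-!
The complete quotients of `√7` are `√7, (√7 + 2)/3, (√7 + 1)/2, (√7 + 1)/3, √7 + 2, (√7 + 2)/3, …`,
so `√7 = [2; 1, 1, 1, 4, 1, 1, 1, 4, …]`. The errors `eₙ = qₙ√7 - pₙ` satisfy the same recurrence
`eₙ₊₂ = aₙ₊₂ eₙ₊₁ + eₙ` as the convergents, whose coefficients have period 4; since `eₙ₊₄` and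
`(8 - 3√7) eₙ` both solve it and agree at `n = 0, 1`, they agree everywhere (`8 - 3√7` is the
inverse of the fundamental unit `8 + 3√7` of `ℤ[√7]`). Summing `|eₙ|` in blocks of four gives
`(|e₀| + |e₁| + |e₂| + |e₃|) / (1 - (8 - 3√7)) = (4 - √7) / (3√7 - 7) = (7 + 5√7) / 14`.
-/

open GenContFract Function
open GenContFract (of)

theorem eq_of_recurrence_two_step {R : Type*} [Add R] [Mul R] (c : ℕ → R) {u w : ℕ → R}
    (hu : ∀ n, u (n + 2) = c n * u (n + 1) + u n) (hw : ∀ n, w (n + 2) = c n * w (n + 1) + w n)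
    (h₀ : u 0 = w 0) (h₁ : u 1 = w 1) : u = w := by
  have key : ∀ n, u n = w n ∧ u (n + 1) = w (n + 1) := by
    intro n
    induction n with
    | zero => exact ⟨h₀, h₁⟩
    | succ n ih => exact ⟨ih.2, by rw [hu, hw, ih.1, ih.2]⟩
  exact funext fun n => (key n).1

theorem hasSum_of_add_eq_mul {𝕜 : Type*} [NormedField 𝕜] [CompleteSpace 𝕜] {f : ℕ → 𝕜}
    {p : ℕ} [NeZero p] {κ : 𝕜} (hκ : ‖κ‖ < 1) (hf : ∀ n, f (n + p) = κ * f n) :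
    HasSum f ((1 - κ)⁻¹ * ∑ j : Fin p, f j) := by
  have hblock : ∀ k j, f (k * p + j) = κ ^ k * f j := by
    intro k j
    induction k with
    | zero => simp only [zero_mul, zero_add, pow_zero, one_mul]
    | succ k ih => rw [add_mul, one_mul, add_right_comm, hf, ih, pow_succ', mul_assoc]
  have hgeom : Summable fun k : ℕ => ‖κ ^ k‖ :=
    (summable_geometric_of_lt_one (norm_nonneg κ) hκ).congr fun k => (norm_pow κ k).symm
  have hfin : Summable fun j : Fin p => ‖f j‖ := .of_finite
  have hpow := hasSum_geometric_of_norm_lt_one hκ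
  have hsum := hasSum_fintype fun j : Fin p => f j
  have hsummable := summable_mul_of_summable_norm hgeom hfin
  have hprod := hpow.mul hsum hsummable
  have hcomp : HasSum (f ∘ (Nat.divModEquiv p).symm) ((1 - κ)⁻¹ * ∑ j : Fin p, f j) :=
    hprod.congr_fun fun kj => hblock kj.1 kj.2
  exact (Nat.divModEquiv p).symm.hasSum_iff.mp hcomp

section FractInv

variable {K : Type*} [DivisionRing K] [LinearOrder K] [FloorRing K]

def fractInv (x : K) : K := (Int.fract x)⁻¹

theorem fractInv_eq_of_floor_eq {x y : K} {n : ℤ} (h : ⌊x⌋ = n) (hy : (x - n) * y = 1) :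
    fractInv x = y := by
  rw [fractInv, Int.fract, h]
  exact inv_eq_of_mul_eq_one_right hy

variable [IsStrictOrderedRing K]

theorem GenContFract.of_s_get?_add (v : K) (m n : ℕ) :
    (of v).s.get? (n + m) = (of (fractInv^[m] v)).s.get? n := by
  induction m generalizing v with
  | zero => rfl
  | succ m ih => rw [← add_assoc, of_s_succ, ih, iterate_succ_apply]; rfl

theorem GenContFract.of_s_get?_eq_floor_fractInv_iterate (v : K) {n : ℕ}
    (h : Int.fract (fractInv^[n] v) ≠ 0) :
    (of v).s.get? n = some ⟨1, ⌊fractInv^[n + 1] v⌋⟩ := by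
  rw [← zero_add n, of_s_get?_add, ← Stream'.Seq.head, of_s_head h, iterate_succ_apply', zero_add]
  rfl

end FractInv

theorem Irrational.fractInv {x : ℝ} (h : Irrational x) : Irrational (fractInv x) :=
  (h.sub_intCast ⌊x⌋).inv

theorem Irrational.fract_ne_zero {x : ℝ} (h : Irrational x) : Int.fract x ≠ 0 :=
  (h.sub_intCast ⌊x⌋).ne_zero

noncomputable def cfError (α : ℝ) (n : ℕ) : ℝ := cfDen α n * α - cfNum α n

theorem cfError_zero (α : ℝ) : cfError α 0 = α - ⌊α⌋ := by
  simp [cfError, cfDen, cfNum, zeroth_num_eq_h, of_h_eq_floor]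

theorem cfError_one {α b : ℝ} (h : (of α).s.get? 0 = some ⟨1, b⟩) :
    cfError α 1 = b * (α - ⌊α⌋) - 1 := by
  rw [cfError, cfDen, cfNum, first_den_eq h, first_num_eq h, of_h_eq_floor]
  ring

theorem cfError_add_two {α b : ℝ} {n : ℕ} (h : (of α).s.get? (n + 1) = some ⟨1, b⟩) :
    cfError α (n + 2) = b * cfError α (n + 1) + cfError α n := by
  simp only [cfError, cfDen, cfNum, nums_recurrence h rfl rfl, dens_recurrence h rfl rfl]
  ring

theorem sqrt_seven_bounds : 5 / 2 < √7 ∧ √7 < 8 / 3 :=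
  ⟨lt_sqrt_of_sq_lt (by norm_num), (sqrt_lt' (by norm_num)).2 (by norm_num)⟩

theorem sqrt_seven_sq : √7 ^ 2 = 7 := sq_sqrt (by norm_num)

theorem floor_sqrt_seven : ⌊√7⌋ = 2 :=
  Int.floor_eq_iff.2 (by constructor <;> push_cast <;> linarith [sqrt_seven_bounds])

theorem fractInv_sqrt_seven : fractInv √7 = (√7 + 2) / 3 :=
  fractInv_eq_of_floor_eq floor_sqrt_seven (by push_cast; linear_combination sqrt_seven_sq / 3)

theorem floor_fractInv_iterate_sqrt_seven (n : ℕ) :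
    ⌊fractInv^[n + 1] √7⌋ = if n % 4 = 3 then 4 else 1 := by
  have floor₁ : ⌊(√7 + 2) / 3⌋ = 1 :=
    Int.floor_eq_iff.2 (by constructor <;> push_cast <;> linarith [sqrt_seven_bounds])
  have floor₂ : ⌊(√7 + 1) / 2⌋ = 1 :=
    Int.floor_eq_iff.2 (by constructor <;> push_cast <;> linarith [sqrt_seven_bounds])
  have floor₃ : ⌊(√7 + 1) / 3⌋ = 1 :=
    Int.floor_eq_iff.2 (by constructor <;> push_cast <;> linarith [sqrt_seven_bounds])
  have floor₄ : ⌊√7 + 2⌋ = 4 :=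
    Int.floor_eq_iff.2 (by constructor <;> push_cast <;> linarith [sqrt_seven_bounds])
  have step₁ : fractInv ((√7 + 2) / 3) = (√7 + 1) / 2 :=
    fractInv_eq_of_floor_eq floor₁ (by push_cast; linear_combination sqrt_seven_sq / 6)
  have step₂ : fractInv ((√7 + 1) / 2) = (√7 + 1) / 3 :=
    fractInv_eq_of_floor_eq floor₂ (by push_cast; linear_combination sqrt_seven_sq / 6)
  have step₃ : fractInv ((√7 + 1) / 3) = √7 + 2 :=
    fractInv_eq_of_floor_eq floor₃ (by push_cast; linear_combination sqrt_seven_sq / 3)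
  have step₄ : fractInv (√7 + 2) = (√7 + 2) / 3 :=
    fractInv_eq_of_floor_eq floor₄ (by push_cast; linear_combination sqrt_seven_sq / 3)
  have hper : IsPeriodicPt fractInv 4 ((√7 + 2) / 3) := by
    simp only [IsPeriodicPt, IsFixedPt, iterate_succ_apply', iterate_zero_apply,
      step₁, step₂, step₃, step₄]
  rw [iterate_succ_apply, fractInv_sqrt_seven, ← hper.iterate_mod_apply]
  have : n % 4 < 4 := Nat.mod_lt n (by norm_num)
  interval_cases n % 4 <;> simp [step₁, step₂, step₃, floor₁, floor₂, floor₃, floor₄]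

theorem of_sqrt_seven_s_get? (n : ℕ) :
    (of √7).s.get? n = some ⟨1, if n % 4 = 3 then 4 else 1⟩ := by
  have hirr : Irrational (fractInv^[n] √7) := by
    induction n with
    | zero => exact Nat.prime_seven.irrational_sqrt
    | succ n ih => rw [iterate_succ_apply']; exact ih.fractInv
  rw [of_s_get?_eq_floor_fractInv_iterate _ hirr.fract_ne_zero, floor_fractInv_iterate_sqrt_seven]
  split_ifs <;> norm_num

theorem cfError_sqrt_seven_add_two (n : ℕ) :
    cfError √7 (n + 2) = (if (n + 1) % 4 = 3 then 4 else 1) * cfError √7 (n + 1) + cfError √7 n :=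
  cfError_add_two (of_sqrt_seven_s_get? (n + 1))

theorem cfError_sqrt_seven_zero : cfError √7 0 = √7 - 2 := by
  rw [cfError_zero, floor_sqrt_seven]; norm_num

theorem cfError_sqrt_seven_one : cfError √7 1 = √7 - 3 := by
  rw [cfError_one (of_sqrt_seven_s_get? 0), floor_sqrt_seven]; norm_num; ring

theorem cfError_sqrt_seven_two : cfError √7 2 = 2 * √7 - 5 := by
  have := cfError_sqrt_seven_add_two 0
  norm_num [cfError_sqrt_seven_zero, cfError_sqrt_seven_one] at this
  rw [this]; ring

theorem cfError_sqrt_seven_three : cfError √7 3 = 3 * √7 - 8 := by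
  have := cfError_sqrt_seven_add_two 1
  norm_num [cfError_sqrt_seven_one, cfError_sqrt_seven_two] at this
  rw [this]; ring

theorem cfError_sqrt_seven_add_four (n : ℕ) :
    cfError √7 (n + 4) = (8 - 3 * √7) * cfError √7 n := by
  have he₄ := cfError_sqrt_seven_add_two 2
  norm_num [cfError_sqrt_seven_two, cfError_sqrt_seven_three] at he₄
  have he₅ := cfError_sqrt_seven_add_two 3
  norm_num [cfError_sqrt_seven_three, he₄] at he₅
  refine congrFun (eq_of_recurrence_two_step (fun n => if (n + 1) % 4 = 3 then 4 else 1)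
    (u := fun n => cfError √7 (n + 4)) (w := fun n => (8 - 3 * √7) * cfError √7 n)
    (fun n => ?_) (fun n => ?_) ?_ ?_) n
  · rw [show n + 2 + 4 = n + 4 + 2 by ring, cfError_sqrt_seven_add_two,
      show n + 4 + 1 = n + 1 + 4 by ring, Nat.add_mod_right]
  · rw [cfError_sqrt_seven_add_two]; ring
  · rw [he₄, cfError_sqrt_seven_zero]; linear_combination 3 * sqrt_seven_sq
  · rw [he₅, cfError_sqrt_seven_one]; linear_combination 3 * sqrt_seven_sq

theorem errorSum_sqrt_seven :
    (∑' n : ℕ, |cfDen (Real.sqrt 7) n * Real.sqrt 7 - cfNum (Real.sqrt 7) n|)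
      = (7 + 5 * Real.sqrt 7) / 14 := by
  obtain ⟨hlo, hhi⟩ := sqrt_seven_bounds
  have hκ : 0 < 8 - 3 * √7 := by linarith
  have hsum := hasSum_of_add_eq_mul (f := fun n => |cfError √7 n|) (p := 4)
    (by rw [Real.norm_eq_abs, abs_of_pos hκ]; linarith) fun n => by
      rw [cfError_sqrt_seven_add_four, abs_mul, abs_of_pos hκ]
  change ∑' n, |cfError √7 n| = _
  rw [hsum.tsum_eq, Fin.sum_univ_eq_sum_range (fun j => |cfError √7 j|)]
  simp only [Finset.sum_range_succ, Finset.sum_range_zero, cfError_sqrt_seven_zero,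
    cfError_sqrt_seven_one, cfError_sqrt_seven_two, cfError_sqrt_seven_three]
  rw [abs_of_pos (by linarith), abs_of_neg (by linarith), abs_of_pos (by linarith),
    abs_of_neg (by linarith)]
  have hden : 1 - (8 - 3 * √7) ≠ 0 := by linarith
  field_simp
  linear_combination -15 * sqrt_seven_sq
end

section
/- Let m ≥ 1 be an integer, let α = (m + √(4 + m²))/2, and let pₙ/qₙ denote the nth convergent of the regular continued fraction expansion of α. Then ∑_{n≥0} |qₙ·α − pₙ| = 1/(α − 1). -/
open Real

/-!
Writing `β = α - m = α⁻¹`, the continued fraction of `α` is `[m; m, m, …]`, so both `pₙ` and `qₙ`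
satisfy `xₙ₊₂ = m xₙ₊₁ + xₙ`, and hence so does the error `qₙ α - pₙ`. Since `β² = 1 - m β`,
the sequence `β (-β)ⁿ` satisfies the same recurrence and has the same first two terms, so
`|qₙ α - pₙ| = βⁿ⁺¹` and the sum is the geometric series `β / (1 - β) = 1 / (α - 1)`.
-/

section PurelyPeriodic

variable {α : ℝ}

theorem GenContFract.of_s_get?_eq_floor_of_fract_inv_eq (hfract : Int.fract α ≠ 0)
    (hfix : (Int.fract α)⁻¹ = α) (n : ℕ) :
    (GenContFract.of α).s.get? n = some ⟨1, (⌊α⌋ : ℝ)⟩ := by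
  induction n with
  | zero =>
    have h := GenContFract.of_s_head hfract
    rw [hfix] at h
    exact h
  | succ n ih => rw [GenContFract.of_s_succ, hfix, ih]

theorem cfNum_add_two_of_fract_inv_eq (hfract : Int.fract α ≠ 0)
    (hfix : (Int.fract α)⁻¹ = α) (n : ℕ) :
    cfNum α (n + 2) = ⌊α⌋ * cfNum α (n + 1) + cfNum α n := by
  simpa [cfNum] using GenContFract.nums_recurrence
    (GenContFract.of_s_get?_eq_floor_of_fract_inv_eq hfract hfix (n + 1)) rfl rfl

theorem cfDen_add_two_of_fract_inv_eq (hfract : Int.fract α ≠ 0)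
    (hfix : (Int.fract α)⁻¹ = α) (n : ℕ) :
    cfDen α (n + 2) = ⌊α⌋ * cfDen α (n + 1) + cfDen α n := by
  simpa [cfDen] using GenContFract.dens_recurrence
    (GenContFract.of_s_get?_eq_floor_of_fract_inv_eq hfract hfix (n + 1)) rfl rfl

theorem cfDen_mul_sub_cfNum_of_fract_inv_eq (hfract : Int.fract α ≠ 0)
    (hfix : (Int.fract α)⁻¹ = α) (n : ℕ) :
    cfDen α n * α - cfNum α n = Int.fract α * (-Int.fract α) ^ n := by
  have hs0 := GenContFract.of_s_get?_eq_floor_of_fract_inv_eq hfract hfix 0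
  have hβ : Int.fract α * α = 1 := by simpa only [hfix] using mul_inv_cancel₀ hfract
  have hα : α = ⌊α⌋ + Int.fract α := (Int.floor_add_fract α).symm
  induction n using Nat.twoStepInduction with
  | zero =>
    simp only [cfDen, cfNum, GenContFract.zeroth_den_eq_one, GenContFract.zeroth_num_eq_h,
      GenContFract.of_h_eq_floor]
    linear_combination hα
  | one =>
    simp only [cfDen, cfNum, GenContFract.first_den_eq hs0, GenContFract.first_num_eq hs0,
      GenContFract.of_h_eq_floor]
    linear_combination ((⌊α⌋ : ℝ) - Int.fract α) * hα + hβ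
  | more n ih₀ ih₁ =>
    rw [cfNum_add_two_of_fract_inv_eq hfract hfix, cfDen_add_two_of_fract_inv_eq hfract hfix]
    linear_combination (⌊α⌋ : ℝ) * ih₁ + ih₀ - (-Int.fract α) ^ n * Int.fract α * hβ
      + (-Int.fract α) ^ n * Int.fract α ^ 2 * hα

end PurelyPeriodic

theorem tsum_abs_cfDen_mul_sub_cfNum_of_eq_add_inv {α : ℝ} (m : ℤ) (hα : 1 < α)
    (hfix : α = m + α⁻¹) : ∑' n : ℕ, |cfDen α n * α - cfNum α n| = 1 / (α - 1) := by
  have hinv_pos : 0 < α⁻¹ := inv_pos.2 (by linarith)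
  have hinv_lt : α⁻¹ < 1 := inv_lt_one_of_one_lt₀ hα
  have hfloor : ⌊α⌋ = m := by rw [Int.floor_eq_iff]; constructor <;> linarith
  have hfract : Int.fract α = α⁻¹ := by rw [Int.fract, hfloor]; linarith
  have herr (n : ℕ) : |cfDen α n * α - cfNum α n| = α⁻¹ * α⁻¹ ^ n := by
    rw [cfDen_mul_sub_cfNum_of_fract_inv_eq (by rw [hfract]; positivity) (by rw [hfract, inv_inv]),
      hfract, abs_mul, abs_pow, abs_neg, abs_of_pos hinv_pos]
  rw [tsum_congr herr, tsum_mul_left, tsum_geometric_of_lt_one hinv_pos.le hinv_lt]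
  field_simp

theorem errorSum_metallic (m : ℕ) (hm : 1 ≤ m) :
    let α : ℝ := ((m : ℝ) + Real.sqrt (4 + (m : ℝ) ^ 2)) / 2
    (∑' n : ℕ, |cfDen α n * α - cfNum α n|) = 1 / (α - 1) := by
  intro α
  have hm' : (1 : ℝ) ≤ m := by exact_mod_cast hm
  have hsq : Real.sqrt (4 + (m : ℝ) ^ 2) ^ 2 = 4 + (m : ℝ) ^ 2 := Real.sq_sqrt (by positivity)
  have hlt : (m : ℝ) < Real.sqrt (4 + (m : ℝ) ^ 2) := by
    rw [Real.lt_sqrt (by positivity)]; linarith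
  have hα : 1 < α := by simp only [α]; linarith
  have hquad : α ^ 2 = m * α + 1 := by simp only [α]; linear_combination hsq / 4
  refine tsum_abs_cfDen_mul_sub_cfNum_of_eq_add_inv m hα ?_
  field_simp
  push_cast
  linear_combination hquad
end

section
/- Let ℓ ≥ 2 and s ≥ 1 be integers. The regular continued fraction expansion of s·e^(1/(ℓs)) is [a₀; a₁, a₂, ...] where a₀ = s and, for every integer k ≥ 0, a_{3k+1} = (2k+1)·ℓ − 1, a_{3k+2} = 1, and a_{3k+3} = 2s − 1. -/
/-!
Lambert's continued fraction `coth x = [1/x; 3/x, 5/x, …]` comes from the series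
`F_k(z) = ∑ₙ (k+n)! / (n! (2k+2n)!) zⁿ`, which satisfy the three-term recurrence
`F_k = 2(2k+1) F_{k+1} + 4z F_{k+2}`: the quotients `H_k = F_k(x²) / (2x F_{k+1}(x²))` obey
`H_k = (2k+1)/x + 1/H_{k+1}`, `H_k > (2k+1)/x` and `H_0 = coth x`.

Take `x = 1/(2ℓs)`, so `e^{2x} = e^{1/(ℓs)}` and `H_k = 2s(2k+1)ℓ + 1/H_{k+1}`. Then
`s e^{1/(ℓs)} = s + 1/T_0` with `T_k = (H_k - 1)/(2s)`, and since `H_{k+1} > 2s + 1`, a direct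
computation expands `T_k = [(2k+1)ℓ - 1; 1, 2s - 1, T_{k+1}]`.
-/

open Real

namespace Lambert

open Nat

/-- Up to normalisation, `series k z` is `₀F₁(; k + 1/2; z/4)`. -/
noncomputable def coeff (k n : ℕ) : ℝ := ((k + n)! : ℝ) / (n ! * (2 * (k + n))!)

noncomputable def series (k : ℕ) (z : ℝ) : ℝ := ∑' n, coeff k n * z ^ n

lemma coeff_pos (k n : ℕ) : 0 < coeff k n := by
  unfold coeff; positivity

lemma coeff_le_one_div_factorial (k n : ℕ) : coeff k n ≤ 1 / n ! := by
  unfold coeff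
  rw [div_le_div_iff₀ (by positivity) (by positivity), one_mul, mul_comm]
  gcongr
  omega

lemma coeff_zero (k : ℕ) : coeff k 0 = 2 * (2 * k + 1) * coeff (k + 1) 0 := by
  simp only [coeff, add_zero, Nat.factorial_zero, Nat.cast_one, one_mul,
    show 2 * (k + 1) = 2 * k + 1 + 1 by ring, Nat.factorial_succ]
  push_cast
  field_simp
  ring

lemma coeff_succ (k n : ℕ) :
    coeff k (n + 1) = 2 * (2 * k + 1) * coeff (k + 1) (n + 1) + 4 * coeff (k + 2) n := by
  simp only [coeff, show k + (n + 1) = k + n + 1 by ring,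
    show k + 1 + (n + 1) = k + n + 1 + 1 by ring, show k + 2 + n = k + n + 1 + 1 by ring,
    show 2 * (k + n + 1) = 2 * (k + n) + 1 + 1 by ring,
    show 2 * (k + n + 1 + 1) = 2 * (k + n) + 1 + 1 + 1 + 1 by ring, Nat.factorial_succ]
  push_cast
  field_simp
  ring

lemma summable_coeff_mul_pow (k : ℕ) (z : ℝ) : Summable fun n ↦ coeff k n * z ^ n := by
  refine .of_norm_bounded (Real.summable_pow_div_factorial |z|) fun n ↦ ?_
  rw [norm_mul, norm_pow, Real.norm_of_nonneg (coeff_pos k n).le, Real.norm_eq_abs, mul_comm,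
    ← mul_one_div]
  gcongr
  exact coeff_le_one_div_factorial k n

lemma series_eq (k : ℕ) (z : ℝ) :
    series k z = 2 * (2 * k + 1) * series (k + 1) z + 4 * z * series (k + 2) z := by
  have h₁ := summable_coeff_mul_pow (k + 1) z
  have h₂ := summable_coeff_mul_pow (k + 2) z
  rw [series, series, series, (summable_coeff_mul_pow k z).tsum_eq_zero_add, h₁.tsum_eq_zero_add,
    ← tsum_mul_left, mul_add, ← tsum_mul_left, add_assoc,
    ← ((summable_nat_add_iff 1).2 h₁).mul_left _ |>.tsum_add (h₂.mul_left _), coeff_zero]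
  congr 1
  · ring
  · exact tsum_congr fun n ↦ by rw [coeff_succ]; ring

lemma series_pos (k : ℕ) {z : ℝ} (hz : 0 ≤ z) : 0 < series k z :=
  (summable_coeff_mul_pow k z).tsum_pos (fun n ↦ by have := coeff_pos k n; positivity) 0
    (by simpa using coeff_pos k 0)

lemma series_zero_sq (x : ℝ) : series 0 (x ^ 2) = cosh x := by
  rw [cosh_eq_tsum, series]
  refine tsum_congr fun n ↦ ?_
  rw [coeff, ← pow_mul, zero_add]
  field_simp

lemma two_mul_mul_series_one_sq (x : ℝ) : 2 * x * series 1 (x ^ 2) = sinh x := by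
  rw [sinh_eq_tsum, series, ← tsum_mul_left]
  refine tsum_congr fun n ↦ ?_
  simp only [coeff, show 1 + n = n + 1 by ring, show 2 * (n + 1) = 2 * n + 1 + 1 by ring,
    Nat.factorial_succ]
  push_cast
  field_simp
  ring

/-- The `k`-th complete quotient of `coth x = [1/x; 3/x, 5/x, …]`. -/
noncomputable def completeQuot (x : ℝ) (k : ℕ) : ℝ :=
  series k (x ^ 2) / (2 * x * series (k + 1) (x ^ 2))

lemma completeQuot_zero (x : ℝ) : completeQuot x 0 = cosh x / sinh x := by
  rw [completeQuot, series_zero_sq, zero_add, two_mul_mul_series_one_sq]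

lemma completeQuot_eq {x : ℝ} (hx : x ≠ 0) (k : ℕ) :
    completeQuot x k = (2 * k + 1) / x + (completeQuot x (k + 1))⁻¹ := by
  have h₁ := (series_pos (k + 1) (sq_nonneg x)).ne'
  have h₂ := (series_pos (k + 2) (sq_nonneg x)).ne'
  rw [completeQuot, completeQuot, series_eq k, inv_div]
  field_simp
  ring

lemma completeQuot_pos {x : ℝ} (hx : 0 < x) (k : ℕ) : 0 < completeQuot x k := by
  have := series_pos k (sq_nonneg x)
  have := series_pos (k + 1) (sq_nonneg x)
  unfold completeQuot; positivity

lemma lt_completeQuot {x : ℝ} (hx : 0 < x) (k : ℕ) : (2 * k + 1) / x < completeQuot x k := by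
  rw [completeQuot_eq hx.ne']
  linarith [inv_pos.2 (completeQuot_pos hx (k + 1))]

end Lambert

lemma Real.cosh_div_sinh_sub_one {x : ℝ} (hx : x ≠ 0) :
    cosh x / sinh x - 1 = 2 / (exp (2 * x) - 1) := by
  have hsinh : sinh x ≠ 0 := Real.sinh_ne_zero.2 hx
  have hexp : exp (2 * x) - 1 ≠ 0 := by
    rw [sub_ne_zero, Ne, Real.exp_eq_one_iff]
    simpa using hx
  rw [div_sub_one hsinh, Real.cosh_sub_sinh, div_eq_div_iff hsinh hexp, Real.sinh_eq,
    two_mul, Real.exp_add, Real.exp_neg]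
  field_simp

theorem Int.fract_intCast_add_inv {K : Type*} [DivisionRing K] [LinearOrder K] [FloorRing K]
    [IsStrictOrderedRing K] (a : ℤ) {w : K} (hw : 1 < w) : Int.fract ((a : K) + w⁻¹) = w⁻¹ :=
  (Int.fract_intCast_add a _).trans <|
    Int.fract_eq_self.2 ⟨inv_nonneg.2 (zero_lt_one.trans hw).le, inv_lt_one_of_one_lt₀ hw⟩

namespace GenContFract

open GenContFract (of)

variable {K : Type*} [DivisionRing K] [LinearOrder K] [FloorRing K]

theorem of_partDens_get?_zero {v : K} (h : Int.fract v ≠ 0) :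
    (of v).partDens.get? 0 = some (⌊(Int.fract v)⁻¹⌋ : K) := by
  simp only [partDens, Stream'.Seq.map_get?]
  rw [← Stream'.Seq.head, of_s_head h]
  rfl

variable [IsStrictOrderedRing K]

theorem of_partDens_get?_succ (v : K) (n : ℕ) :
    (of v).partDens.get? (n + 1) = (of (Int.fract v)⁻¹).partDens.get? n := by
  simp only [partDens, Stream'.Seq.map_get?, of_s_succ]

variable {w : K} (a : ℤ)

theorem of_h_intCast_add_inv (hw : 1 < w) : (of ((a : K) + w⁻¹)).h = a := by
  rw [of_h_eq_floor, ← Int.self_sub_fract, Int.fract_intCast_add_inv a hw, add_sub_cancel_right]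

theorem of_partDens_get?_zero_intCast_add_inv (hw : 1 < w) :
    (of ((a : K) + w⁻¹)).partDens.get? 0 = some ((of w).h) := by
  have hfract := Int.fract_intCast_add_inv a hw
  rw [of_partDens_get?_zero (hfract.symm ▸ inv_ne_zero (zero_lt_one.trans hw).ne'), hfract,
    inv_inv, of_h_eq_floor]

theorem of_partDens_get?_succ_intCast_add_inv (hw : 1 < w) (n : ℕ) :
    (of ((a : K) + w⁻¹)).partDens.get? (n + 1) = (of w).partDens.get? n := by
  rw [of_partDens_get?_succ, Int.fract_intCast_add_inv a hw, inv_inv]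

end GenContFract

noncomputable def hurwitzQuot (s : ℕ) (u : ℝ) : ℝ := (u - 1) / (2 * s)

section HurwitzQuot

variable {s : ℕ} {u : ℝ}

lemma one_lt_hurwitzQuot (hs : 1 ≤ s) (hu : 2 * s + 1 < u) : 1 < hurwitzQuot s u := by
  rw [hurwitzQuot, one_lt_div (by positivity)]
  linarith

/-- `hurwitzQuot s (2 s m + u⁻¹) = [m - 1; 1, 2s - 1, hurwitzQuot s u]`, each step being a
legitimate step of the continued fraction algorithm. -/
lemma exists_hurwitzQuot_eq (hs : 1 ≤ s) (hu : 2 * s + 1 < u) (m : ℤ) :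
    ∃ w₁ w₂ : ℝ, 1 < w₁ ∧ 1 < w₂ ∧
      hurwitzQuot s (2 * s * m + u⁻¹) = ((m - 1 : ℤ) : ℝ) + w₁⁻¹ ∧
      w₁ = ((1 : ℤ) : ℝ) + w₂⁻¹ ∧ w₂ = ((2 * s - 1 : ℤ) : ℝ) + (hurwitzQuot s u)⁻¹ := by
  have hs' : (1 : ℝ) ≤ s := by exact_mod_cast hs
  have hu₀ : u ≠ 0 := by linarith
  have hu₁ : u - 1 ≠ 0 := by linarith
  have hu₂ : (2 * s - 1) * u + 1 ≠ 0 := by nlinarith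
  refine ⟨2 * s * u / ((2 * s - 1) * u + 1), ((2 * s - 1) * u + 1) / (u - 1), ?_, ?_, ?_, ?_, ?_⟩
  · rw [one_lt_div (by nlinarith)]; linarith
  · rw [one_lt_div (by linarith)]; nlinarith
  · rw [hurwitzQuot, inv_div]
    push_cast
    field_simp
    ring
  · rw [inv_div, Int.cast_one, one_add_div hu₂]
    ring
  · rw [hurwitzQuot, inv_div]
    push_cast
    field_simp
    ring

end HurwitzQuot

section HurwitzExp

open GenContFract (of)

open GenContFract

variable {ℓ s : ℕ}

lemma Lambert.completeQuot_one_div_eq (hℓ : ℓ ≠ 0) (hs : s ≠ 0) (k : ℕ) :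
    completeQuot (1 / (2 * ℓ * s)) k =
      2 * s * (((2 * k + 1) * ℓ : ℤ) : ℝ) + (completeQuot (1 / (2 * ℓ * s)) (k + 1))⁻¹ := by
  rw [completeQuot_eq (by positivity)]
  push_cast
  field_simp

lemma Lambert.lt_completeQuot_one_div (hℓ : 2 ≤ ℓ) (hs : 1 ≤ s) (k : ℕ) :
    2 * s + 1 < completeQuot (1 / (2 * ℓ * s)) k := by
  have hℓ' : (2 : ℝ) ≤ ℓ := by exact_mod_cast hℓ
  have hs' : (1 : ℝ) ≤ s := by exact_mod_cast hs
  have hk : (0 : ℝ) ≤ k := k.cast_nonneg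
  refine lt_of_le_of_lt ?_ (lt_completeQuot (by positivity) k)
  rw [div_div_eq_mul_div, div_one]
  have : 4 * (s : ℝ) ≤ 2 * ℓ * s := by nlinarith
  nlinarith [mul_nonneg hk (by positivity : (0 : ℝ) ≤ 2 * ℓ * s)]

/-- The complete quotient of index `3k + 1` of `s e^{1/(ℓs)}`. -/
noncomputable def expQuot (ℓ s k : ℕ) : ℝ :=
  hurwitzQuot s (Lambert.completeQuot (1 / (2 * ℓ * s)) k)

lemma one_lt_expQuot (hℓ : 2 ≤ ℓ) (hs : 1 ≤ s) (k : ℕ) : 1 < expQuot ℓ s k :=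
  one_lt_hurwitzQuot hs (Lambert.lt_completeQuot_one_div hℓ hs k)

lemma exists_expQuot_eq (hℓ : 2 ≤ ℓ) (hs : 1 ≤ s) (k : ℕ) :
    ∃ w₁ w₂ : ℝ, 1 < w₁ ∧ 1 < w₂ ∧ expQuot ℓ s k = (((2 * k + 1) * ℓ - 1 : ℤ) : ℝ) + w₁⁻¹ ∧
      w₁ = ((1 : ℤ) : ℝ) + w₂⁻¹ ∧ w₂ = ((2 * s - 1 : ℤ) : ℝ) + (expQuot ℓ s (k + 1))⁻¹ := by
  rw [expQuot, Lambert.completeQuot_one_div_eq (by omega) (by omega)]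
  exact exists_hurwitzQuot_eq hs (Lambert.lt_completeQuot_one_div hℓ hs (k + 1)) _

lemma of_expQuot_h (hℓ : 2 ≤ ℓ) (hs : 1 ≤ s) (k : ℕ) :
    (of (expQuot ℓ s k)).h = (2 * k + 1) * ℓ - 1 := by
  obtain ⟨w₁, w₂, h₁, -, hv, -, -⟩ := exists_expQuot_eq hℓ hs k
  rw [hv, of_h_intCast_add_inv _ h₁]
  push_cast; ring

lemma of_expQuot_partDens_get?_zero (hℓ : 2 ≤ ℓ) (hs : 1 ≤ s) (k : ℕ) :
    (of (expQuot ℓ s k)).partDens.get? 0 = some 1 := by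
  obtain ⟨w₁, w₂, h₁, h₂, hv, hw₁, -⟩ := exists_expQuot_eq hℓ hs k
  rw [hv, of_partDens_get?_zero_intCast_add_inv _ h₁, hw₁, of_h_intCast_add_inv _ h₂,
    Int.cast_one]

lemma of_expQuot_partDens_get?_one (hℓ : 2 ≤ ℓ) (hs : 1 ≤ s) (k : ℕ) :
    (of (expQuot ℓ s k)).partDens.get? 1 = some (2 * (s : ℝ) - 1) := by
  obtain ⟨w₁, w₂, h₁, h₂, hv, hw₁, hw₂⟩ := exists_expQuot_eq hℓ hs k
  rw [hv, of_partDens_get?_succ_intCast_add_inv _ h₁, hw₁,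
    of_partDens_get?_zero_intCast_add_inv _ h₂, hw₂,
    of_h_intCast_add_inv _ (one_lt_expQuot hℓ hs (k + 1))]
  norm_cast

lemma of_expQuot_partDens_get?_two (hℓ : 2 ≤ ℓ) (hs : 1 ≤ s) (k : ℕ) :
    (of (expQuot ℓ s k)).partDens.get? 2 = some (of (expQuot ℓ s (k + 1))).h := by
  obtain ⟨w₁, w₂, h₁, h₂, hv, hw₁, hw₂⟩ := exists_expQuot_eq hℓ hs k
  rw [hv, of_partDens_get?_succ_intCast_add_inv _ h₁, hw₁,
    of_partDens_get?_succ_intCast_add_inv _ h₂, hw₂,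
    of_partDens_get?_zero_intCast_add_inv _ (one_lt_expQuot hℓ hs (k + 1))]

lemma of_expQuot_partDens_get?_add_three (hℓ : 2 ≤ ℓ) (hs : 1 ≤ s) (k n : ℕ) :
    (of (expQuot ℓ s k)).partDens.get? (n + 3) = (of (expQuot ℓ s (k + 1))).partDens.get? n := by
  obtain ⟨w₁, w₂, h₁, h₂, hv, hw₁, hw₂⟩ := exists_expQuot_eq hℓ hs k
  rw [hv, of_partDens_get?_succ_intCast_add_inv _ h₁, hw₁,
    of_partDens_get?_succ_intCast_add_inv _ h₂, hw₂,
    of_partDens_get?_succ_intCast_add_inv _ (one_lt_expQuot hℓ hs (k + 1))]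

lemma of_expQuot_zero_partDens_get?_three_mul_add (hℓ : 2 ≤ ℓ) (hs : 1 ≤ s) (k r : ℕ) :
    (of (expQuot ℓ s 0)).partDens.get? (3 * k + r) = (of (expQuot ℓ s k)).partDens.get? r := by
  induction k generalizing r with
  | zero => rw [mul_zero, zero_add]
  | succ k ih =>
    rw [show 3 * (k + 1) + r = 3 * k + (r + 3) by ring, ih,
      of_expQuot_partDens_get?_add_three hℓ hs]

lemma mul_exp_eq_add_inv_expQuot (hℓ : ℓ ≠ 0) (hs : s ≠ 0) :
    (s : ℝ) * exp (1 / (ℓ * s)) = ((s : ℤ) : ℝ) + (expQuot ℓ s 0)⁻¹ := by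
  have hx : (1 : ℝ) / (2 * ℓ * s) ≠ 0 := by positivity
  have hexp : exp (1 / (ℓ * s)) - 1 ≠ 0 := by
    rw [sub_ne_zero, Ne, Real.exp_eq_one_iff]; positivity
  rw [expQuot, hurwitzQuot, Lambert.completeQuot_zero, Real.cosh_div_sinh_sub_one hx,
    show 2 * (1 / (2 * ℓ * s)) = 1 / ((ℓ : ℝ) * s) by field_simp]
  push_cast
  field_simp
  ring

end HurwitzExp

theorem contFract_of_s_exp_one_div_ls (ℓ s : ℕ) (hℓ : 2 ≤ ℓ) (hs : 1 ≤ s) :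
    let α : ℝ := (s : ℝ) * Real.exp (1 / ((ℓ : ℝ) * (s : ℝ)))
    (GenContFract.of α).h = (s : ℝ) ∧
      ∀ k : ℕ,
        (GenContFract.of α).partDens.get? (3 * k) =
            some ((2 * (k : ℝ) + 1) * (ℓ : ℝ) - 1) ∧
        (GenContFract.of α).partDens.get? (3 * k + 1) = some 1 ∧
        (GenContFract.of α).partDens.get? (3 * k + 2) = some (2 * (s : ℝ) - 1) := by
  intro α
  have hα : α = ((s : ℤ) : ℝ) + (expQuot ℓ s 0)⁻¹ :=
    mul_exp_eq_add_inv_expQuot (by omega) (by omega)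
  have h₀ := one_lt_expQuot hℓ hs 0
  refine ⟨by rw [hα, GenContFract.of_h_intCast_add_inv _ h₀, Int.cast_natCast],
    fun k ↦ ⟨?_, ?_, ?_⟩⟩
  · cases k with
    | zero => rw [hα, GenContFract.of_partDens_get?_zero_intCast_add_inv _ h₀, of_expQuot_h hℓ hs]
    | succ k =>
      rw [hα, show 3 * (k + 1) = 3 * k + 2 + 1 by ring,
        GenContFract.of_partDens_get?_succ_intCast_add_inv _ h₀,
        of_expQuot_zero_partDens_get?_three_mul_add hℓ hs, of_expQuot_partDens_get?_two hℓ hs,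
        of_expQuot_h hℓ hs]
  · rw [hα, GenContFract.of_partDens_get?_succ_intCast_add_inv _ h₀, ← add_zero (3 * k),
      of_expQuot_zero_partDens_get?_three_mul_add hℓ hs, of_expQuot_partDens_get?_zero hℓ hs]
  · rw [hα, GenContFract.of_partDens_get?_succ_intCast_add_inv _ h₀,
      of_expQuot_zero_partDens_get?_three_mul_add hℓ hs, of_expQuot_partDens_get?_one hℓ hs]
end

section
/- Let ℓ ≥ 2 and s ≥ 1 be integers and let pₙ/qₙ denote the nth convergent of the regular continued fraction expansion of s·e^(1/(ℓs)). Then for every integer n ≥ 0: (i) p_{3n} − s·e^(1/(ℓs))·q_{3n} = −(1/(ℓs)^(n+1)) · ∫₀¹ (xⁿ(x−1)ⁿ/n!) · s·e^(x/(ℓs)) dx; (ii) p_{3n+1} − s·e^(1/(ℓs))·q_{3n+1} = (1/(s·(ℓs)^(n+1))) · ∫₀¹ ((x+s−1)·xⁿ(x−1)ⁿ/n!) · s·e^(x/(ℓs)) dx; (iii) p_{3n+2} − s·e^(1/(ℓs))·q_{3n+2} = (1/(s·(ℓs)^(n+1))) · ∫₀¹ (xⁿ(x−1)^(n+1)/n!)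 · s·e^(x/(ℓs)) dx. -/
open Real

/-!
Positive reals `r₀ = α, r₁ = 1, r₂, …` with `r_k = b_k r_{k+1} + r_{k+2}` for integers `b_k` and
`0 < r_{k+2} < r_{k+1}` are the remainders of the Euclidean algorithm on `(α, 1)`: the `b_k` are the
partial quotients of `α`, and `p_k - α q_k = (-1)^(k+1) r_{k+2}`.

For `α = s e^{1/c}` with `c = ℓ s`, let `U_n` and `V_n` be the integrals over `[0, 1]` of
`x^n (1-x)^n e^{x/c}` and `x^n (1-x)^(n+1) e^{x/c}`, divided by `c^(n+1) n!`. Then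
`r_{3n+2} = s U_n`, `r_{3n+3} = s U_n - V_n`, `r_{3n+4} = V_n` are such remainders, with quotients
`s; ℓ-1, 1, 2s-1, 3ℓ-1, 1, 2s-1, 5ℓ-1, …`: integration by parts gives `U_{n+1} = U_n - 2 V_n` and
`V_{n+1} = (2n+3) c U_{n+1} - V_n`, and the inequalities come from the positivity of the integrands,
together with `s (e^{1/c} - 1) < 1` for the first one.
-/

open intervalIntegral

structure IsRemainderSeq (α : ℝ) (b : ℕ → ℤ) (r : ℕ → ℝ) : Prop where
  zero : r 0 = α
  one : r 1 = 1
  eq_mul_add : ∀ k, r k = b k * r (k + 1) + r (k + 2)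
  pos : ∀ k, 0 < r (k + 2)
  lt : ∀ k, r (k + 2) < r (k + 1)

namespace IsRemainderSeq

variable {α : ℝ} {b : ℕ → ℤ} {r : ℕ → ℝ} (h : IsRemainderSeq α b r)
include h

lemma pos_succ (k : ℕ) : 0 < r (k + 1) := by
  cases k with
  | zero => simp [h.one]
  | succ k => exact h.pos k

lemma div_eq (k : ℕ) : r k / r (k + 1) = b k + r (k + 2) / r (k + 1) := by
  rw [h.eq_mul_add k, add_div, mul_div_cancel_right₀ _ (h.pos_succ k).ne']

lemma floor_div (k : ℕ) : ⌊r k / r (k + 1)⌋ = b k := by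
  rw [h.div_eq, Int.floor_intCast_add, add_eq_left, Int.floor_eq_zero_iff]
  exact ⟨(div_pos (h.pos k) (h.pos_succ k)).le, (div_lt_one (h.pos_succ k)).2 (h.lt k)⟩

lemma fract_div (k : ℕ) : Int.fract (r k / r (k + 1)) = r (k + 2) / r (k + 1) := by
  rw [Int.fract, h.floor_div, h.div_eq, add_sub_cancel_left]

lemma of_div_s_get? (k j : ℕ) :
    (GenContFract.of (r j / r (j + 1))).s.get? k = some ⟨1, (b (j + k + 1) : ℝ)⟩ := by
  have hinv (j : ℕ) : (Int.fract (r j / r (j + 1)))⁻¹ = r (j + 1) / r (j + 2) := by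
    rw [h.fract_div, inv_div]
  induction k generalizing j with
  | zero =>
    have hne : Int.fract (r j / r (j + 1)) ≠ 0 := by
      rw [h.fract_div]
      exact (div_pos (h.pos j) (h.pos_succ j)).ne'
    have hhead := GenContFract.of_s_head hne
    rwa [hinv, h.floor_div] at hhead
  | succ k ih =>
    rw [GenContFract.of_s_succ, hinv, ih, add_right_comm j, add_assoc]
    rfl

lemma of_s_get? (k : ℕ) : (GenContFract.of α).s.get? k = some ⟨1, (b (k + 1) : ℝ)⟩ := by
  have hget := h.of_div_s_get? k 0
  rwa [h.zero, h.one, div_one, zero_add] at hget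

lemma of_h : (GenContFract.of α).h = b 0 := by
  rw [GenContFract.of_h_eq_floor, ← h.floor_div 0, h.zero, h.one, div_one]

theorem nums_sub_mul_dens (k : ℕ) :
    (GenContFract.of α).nums k - α * (GenContFract.of α).dens k = (-1) ^ (k + 1) * r (k + 2) := by
  set g := GenContFract.of α
  suffices ∀ k, g.nums k - α * g.dens k = (-1) ^ (k + 1) * r (k + 2) ∧
      g.nums (k + 1) - α * g.dens (k + 1) = (-1) ^ (k + 2) * r (k + 3) from (this k).1
  intro k
  induction k with
  | zero =>
    have h0 : α = b 0 + r 2 := by simpa [h.zero, h.one] using h.eq_mul_add 0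
    have h1 : 1 = b 1 * r 2 + r 3 := by simpa [h.one] using h.eq_mul_add 1
    rw [GenContFract.zeroth_num_eq_h, GenContFract.zeroth_den_eq_one,
      GenContFract.first_num_eq (h.of_s_get? 0), GenContFract.first_den_eq (h.of_s_get? 0), h.of_h]
    exact ⟨by linear_combination -h0, by linear_combination -(b 1 : ℝ) * h0 + h1⟩
  | succ k ih =>
    refine ⟨ih.2, ?_⟩
    rw [GenContFract.nums_recurrence (h.of_s_get? (k + 1)) rfl rfl,
      GenContFract.dens_recurrence (h.of_s_get? (k + 1)) rfl rfl]
    linear_combination ih.1 + (b (k + 2) : ℝ) * ih.2 + (-1) ^ (k + 1) * h.eq_mul_add (k + 2)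

end IsRemainderSeq

theorem integral_deriv_add_div_mul_exp {F F' : ℝ → ℝ} {a b c : ℝ}
    (hF : ∀ x ∈ Set.uIcc a b, HasDerivAt F (F' x) x)
    (hF' : IntervalIntegrable F' MeasureTheory.volume a b) :
    ∫ x in a..b, (F' x + F x / c) * exp (x / c) = F b * exp (b / c) - F a * exp (a / c) := by
  have hexp : Continuous fun x : ℝ => exp (x / c) := by fun_prop
  have hFc : ContinuousOn F (Set.uIcc a b) := fun x hx => (hF x hx).continuousAt.continuousWithinAt
  refine integral_eq_sub_of_hasDerivAt (f := fun x => F x * exp (x / c)) (fun x hx => ?_) ?_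
  · exact ((hF x hx).mul ((hasDerivAt_id' x).div_const c).exp).congr_deriv (by ring)
  · exact (hF'.add (hFc.div_const c).intervalIntegrable).mul_continuousOn hexp.continuousOn

noncomputable def expBetaIntegral (c : ℝ) (m k : ℕ) : ℝ :=
  ∫ x in (0 : ℝ)..1, x ^ m * (1 - x) ^ k * exp (x / c)

namespace expBetaIntegral

variable (c : ℝ) (m k : ℕ)

lemma intervalIntegrable {a b : ℝ} :
    IntervalIntegrable (fun x => x ^ m * (1 - x) ^ k * exp (x / c)) MeasureTheory.volume a b :=
  Continuous.intervalIntegrable (by fun_prop) _ _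

lemma pos : 0 < expBetaIntegral c m k :=
  intervalIntegral_pos_of_pos_on (intervalIntegrable c m k)
    (fun x ⟨hx0, hx1⟩ => by have := sub_pos.2 hx1; positivity) one_pos

lemma eq_add :
    expBetaIntegral c m k = expBetaIntegral c (m + 1) k + expBetaIntegral c m (k + 1) := by
  rw [expBetaIntegral, expBetaIntegral, expBetaIntegral,
    ← integral_add (intervalIntegrable c _ _) (intervalIntegrable c _ _)]
  congr 1; ext x; ring

lemma zero_zero (hc : c ≠ 0) : expBetaIntegral c 0 0 = c * (exp (1 / c) - 1) := by
  have h := integral_deriv_add_div_mul_exp (F := fun _ => c) (F' := fun _ => 0) (a := 0) (b := 1)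
    (c := c) (fun x _ => hasDerivAt_const x c) intervalIntegrable_const
  simp only [zero_add, div_self hc, one_mul] at h
  simp [expBetaIntegral, h, mul_sub]

lemma zero_one (hc : c ≠ 0) : expBetaIntegral c 0 1 = c * (expBetaIntegral c 0 0 - 1) := by
  have h := integral_deriv_add_div_mul_exp (F := fun x => 1 - x) (F' := fun _ => -1) (a := 0)
    (b := 1) (c := c) (fun x _ => by simpa using (hasDerivAt_id x).const_sub 1)
    intervalIntegrable_const
  have hsplit : expBetaIntegral c 0 1 / c - expBetaIntegral c 0 0 =
      ∫ x in (0 : ℝ)..1, (-1 + (1 - x) / c) * exp (x / c) := by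
    rw [expBetaIntegral, expBetaIntegral, ← integral_div, ← integral_sub]
    · congr 1; ext x; ring
    all_goals exact Continuous.intervalIntegrable (by fun_prop) _ _
  rw [h, sub_self, zero_mul, zero_div, exp_zero] at hsplit
  field_simp at hsplit
  linear_combination hsplit

lemma by_parts :
    (m + 1) * expBetaIntegral c m (k + 1) + expBetaIntegral c (m + 1) (k + 1) / c =
      (k + 1) * expBetaIntegral c (m + 1) k := by
  have hderiv (x : ℝ) : HasDerivAt (fun x => x ^ (m + 1) * (1 - x) ^ (k + 1))
      ((m + 1) * (x ^ m * (1 - x) ^ (k + 1)) - (k + 1) * (x ^ (m + 1) * (1 - x) ^ k)) x := by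
    refine ((hasDerivAt_pow (m + 1) x).fun_mul
      (((hasDerivAt_id' x).const_sub 1).fun_pow (k + 1))).congr_deriv ?_
    simp only [Nat.add_sub_cancel]
    push_cast
    ring
  have h := integral_deriv_add_div_mul_exp (a := 0) (b := 1) (c := c) (fun x _ => hderiv x)
    (Continuous.intervalIntegrable (by fun_prop) _ _)
  have hsplit : (m + 1) * expBetaIntegral c m (k + 1) - (k + 1) * expBetaIntegral c (m + 1) k
      + expBetaIntegral c (m + 1) (k + 1) / c = ∫ x in (0 : ℝ)..1,
        ((m + 1) * (x ^ m * (1 - x) ^ (k + 1)) - (k + 1) * (x ^ (m + 1) * (1 - x) ^ k)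
          + x ^ (m + 1) * (1 - x) ^ (k + 1) / c) * exp (x / c) := by
    simp only [expBetaIntegral]
    rw [← integral_const_mul, ← integral_const_mul, ← integral_div, ← integral_sub, ← integral_add]
    · congr 1; ext x; ring
    all_goals exact Continuous.intervalIntegrable (by fun_prop) _ _
  rw [h] at hsplit
  simp only [one_pow, sub_self, zero_pow (Nat.succ_ne_zero _), mul_zero, zero_mul, sub_zero]
    at hsplit
  linear_combination hsplit

lemma neg_one_pow_mul_eq_integral :
    (-1) ^ k * expBetaIntegral c m k = ∫ x in (0 : ℝ)..1, x ^ m * (x - 1) ^ k * exp (x / c) := by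
  rw [expBetaIntegral, ← integral_const_mul]
  congr 1; ext x
  rw [show x - 1 = -1 * (1 - x) by ring, mul_pow]
  ring

end expBetaIntegral

theorem mul_exp_inv_sub_one_lt_one {s c : ℝ} (hs : 0 < s) (hc : s + 1 ≤ c) :
    s * (exp (1 / c) - 1) < 1 := by
  have hc1 : 1 < c := by linarith
  have hexp : exp (1 / c) < 1 / (1 - 1 / c) :=
    exp_bound_div_one_sub_of_interval' (by positivity) ((div_lt_one (by linarith)).2 hc1)
  have hval : 1 / (1 - 1 / c) - 1 = 1 / (c - 1) := by
    have : c - 1 ≠ 0 := by linarith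
    field_simp
    ring
  calc s * (exp (1 / c) - 1) < s * (1 / (c - 1)) := by
        rw [← hval]; exact mul_lt_mul_of_pos_left (by linarith) hs
    _ ≤ 1 := by rw [mul_one_div, div_le_one (by linarith)]; linarith

namespace Komatsu

noncomputable def U (c : ℝ) (n : ℕ) : ℝ := expBetaIntegral c n n / (c ^ (n + 1) * n.factorial)

noncomputable def V (c : ℝ) (n : ℕ) : ℝ :=
  expBetaIntegral c n (n + 1) / (c ^ (n + 1) * n.factorial)

section

variable {c : ℝ} (n : ℕ)

lemma U_pos (hc : 0 < c) : 0 < U c n := div_pos (expBetaIntegral.pos c n n) (by positivity)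

lemma V_pos (hc : 0 < c) : 0 < V c n := div_pos (expBetaIntegral.pos c n (n + 1)) (by positivity)

lemma U_zero (hc : c ≠ 0) : U c 0 = exp (1 / c) - 1 := by
  rw [U, expBetaIntegral.zero_zero c hc, zero_add, pow_one, Nat.factorial_zero, Nat.cast_one,
    mul_one, mul_div_cancel_left₀ _ hc]

lemma V_zero (hc : c ≠ 0) : V c 0 = c * U c 0 - 1 := by
  rw [V, U, expBetaIntegral.zero_one c hc, zero_add, pow_one, Nat.factorial_zero, Nat.cast_one,
    mul_one, mul_div_cancel_left₀ _ hc, mul_div_cancel₀ _ hc]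

lemma U_succ (hc : c ≠ 0) : U c (n + 1) = U c n - 2 * V c n := by
  have hK : expBetaIntegral c (n + 1) (n + 1) =
      c * (n + 1) * (expBetaIntegral c n n - 2 * expBetaIntegral c n (n + 1)) := by
    have h1 := expBetaIntegral.by_parts c n n
    have h2 := expBetaIntegral.eq_add c n n
    field_simp at h1
    linear_combination h1 - c * (n + 1) * h2
  rw [U, U, V, hK, Nat.factorial_succ, pow_succ]
  push_cast
  field_simp

lemma V_succ (hc : c ≠ 0) : V c (n + 1) = (2 * n + 3) * c * U c (n + 1) - V c n := by
  have hK : expBetaIntegral c (n + 1) (n + 2) = c * ((2 * n + 3) *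
      expBetaIntegral c (n + 1) (n + 1) - (n + 1) * expBetaIntegral c n (n + 1)) := by
    have h1 := expBetaIntegral.by_parts c n (n + 1)
    have h2 := expBetaIntegral.eq_add c n (n + 1)
    field_simp at h1
    push_cast at h1
    linear_combination h1 + c * (n + 1) * h2
  rw [V, V, U, hK, Nat.factorial_succ, pow_succ]
  push_cast
  field_simp

lemma two_mul_V_lt_U (hc : 0 < c) : 2 * V c n < U c n := by
  linarith [U_succ n hc.ne', U_pos (n + 1) hc]

lemma mul_U_succ_lt_V (hc : 0 < c) : c * (n + 1) * U c (n + 1) < V c n := by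
  have hlt : expBetaIntegral c (n + 1) (n + 1) < expBetaIntegral c n (n + 1) := by
    linarith [expBetaIntegral.eq_add c n (n + 1), expBetaIntegral.pos c n (n + 2)]
  have hU : c * (n + 1) * U c (n + 1) =
      expBetaIntegral c (n + 1) (n + 1) / (c ^ (n + 1) * n.factorial) := by
    rw [U, Nat.factorial_succ, pow_succ]
    push_cast
    field_simp
  rw [hU, V]
  exact div_lt_div_of_pos_right hlt (by positivity)

variable (s : ℝ)

lemma integral_eq_U (hc : c ≠ 0) :
    ∫ x in (0 : ℝ)..1, (x ^ n * (x - 1) ^ n / n.factorial) * (s * exp (x / c)) =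
      (-1) ^ n * s * c ^ (n + 1) * U c n := by
  calc _ = s / n.factorial * ∫ x in (0 : ℝ)..1, x ^ n * (x - 1) ^ n * exp (x / c) := by
        rw [← integral_const_mul]; congr 1; ext x; ring
    _ = _ := by rw [← expBetaIntegral.neg_one_pow_mul_eq_integral, U]; field_simp

lemma integral_eq_V (hc : c ≠ 0) :
    ∫ x in (0 : ℝ)..1, (x ^ n * (x - 1) ^ (n + 1) / n.factorial) * (s * exp (x / c)) =
      (-1) ^ (n + 1) * s * c ^ (n + 1) * V c n := by
  calc _ = s / n.factorial * ∫ x in (0 : ℝ)..1, x ^ n * (x - 1) ^ (n + 1) * exp (x / c) := by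
        rw [← integral_const_mul]; congr 1; ext x; ring
    _ = _ := by rw [← expBetaIntegral.neg_one_pow_mul_eq_integral, V]; field_simp

lemma integral_eq_U_sub_V (hc : c ≠ 0) :
    ∫ x in (0 : ℝ)..1, ((x + s - 1) * x ^ n * (x - 1) ^ n / n.factorial) * (s * exp (x / c)) =
      (-1) ^ n * s * c ^ (n + 1) * (s * U c n - V c n) := by
  calc _ = ∫ x in (0 : ℝ)..1, s * ((x ^ n * (x - 1) ^ n / n.factorial) * (s * exp (x / c))) +
        (x ^ n * (x - 1) ^ (n + 1) / n.factorial) * (s * exp (x / c)) := by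
        congr 1; ext x; ring
    _ = _ := by
      rw [integral_add, integral_const_mul, integral_eq_U n s hc, integral_eq_V n s hc]
      · ring
      all_goals exact Continuous.intervalIntegrable (by fun_prop) _ _

end

def partialQuot (ℓ s : ℕ) : ℕ → ℤ
  | 0 => s
  | 1 => ℓ - 1
  | k + 2 => match k % 3 with
    | 0 => 1
    | 1 => 2 * s - 1
    | _ => (2 * (k / 3 : ℕ) + 3) * ℓ - 1

noncomputable def remainder (ℓ s : ℕ) : ℕ → ℝ
  | 0 => s * exp (1 / (ℓ * s))
  | 1 => 1
  | k + 2 => match k % 3 with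
    | 0 => s * U (ℓ * s) (k / 3)
    | 1 => s * U (ℓ * s) (k / 3) - V (ℓ * s) (k / 3)
    | _ => V (ℓ * s) (k / 3)

section

variable {ℓ s : ℕ} (n : ℕ)

lemma partialQuot_three_mul_add_two : partialQuot ℓ s (3 * n + 2) = 1 := by
  simp only [partialQuot, Nat.mul_mod_right]

lemma partialQuot_three_mul_add_three : partialQuot ℓ s (3 * n + 3) = 2 * s - 1 := by
  simp only [partialQuot, show (3 * n + 1) % 3 = 1 by omega]

lemma partialQuot_three_mul_add_four : partialQuot ℓ s (3 * n + 4) = (2 * n + 3) * ℓ - 1 := by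
  simp only [partialQuot, show (3 * n + 2) % 3 = 2 by omega, show (3 * n + 2) / 3 = n by omega]

lemma remainder_three_mul_add_two : remainder ℓ s (3 * n + 2) = s * U (ℓ * s) n := by
  simp only [remainder, Nat.mul_mod_right, show 3 * n / 3 = n by omega]

lemma remainder_three_mul_add_three :
    remainder ℓ s (3 * n + 3) = s * U (ℓ * s) n - V (ℓ * s) n := by
  simp only [remainder, show (3 * n + 1) % 3 = 1 by omega, show (3 * n + 1) / 3 = n by omega]

lemma remainder_three_mul_add_four : remainder ℓ s (3 * n + 4) = V (ℓ * s) n := by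
  simp only [remainder, show (3 * n + 2) % 3 = 2 by omega, show (3 * n + 2) / 3 = n by omega]

lemma remainder_three_mul_add_five : remainder ℓ s (3 * n + 5) = s * U (ℓ * s) (n + 1) :=
  remainder_three_mul_add_two (n + 1)

lemma remainder_three_mul_add_six :
    remainder ℓ s (3 * n + 6) = s * U (ℓ * s) (n + 1) - V (ℓ * s) (n + 1) :=
  remainder_three_mul_add_three (n + 1)

end

lemma remainder_eq_mul_add {ℓ s : ℕ} (hc : (ℓ * s : ℝ) ≠ 0) (k : ℕ) :
    remainder ℓ s k = partialQuot ℓ s k * remainder ℓ s (k + 1) + remainder ℓ s (k + 2) := by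
  match k with
  | 0 =>
    simp only [remainder, partialQuot, Nat.zero_mod, Nat.zero_div, U_zero hc]
    push_cast
    ring
  | 1 =>
    simp only [remainder, partialQuot, Nat.reduceMod, Nat.reduceDiv, V_zero hc]
    push_cast
    ring
  | k + 2 =>
    obtain ⟨n, rfl | rfl | rfl⟩ : ∃ n, k = 3 * n ∨ k = 3 * n + 1 ∨ k = 3 * n + 2 :=
      ⟨k / 3, by omega⟩
    · simp only [add_assoc, Nat.reduceAdd, remainder_three_mul_add_two,
        remainder_three_mul_add_three, remainder_three_mul_add_four, partialQuot_three_mul_add_two]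
      push_cast
      ring
    · simp only [add_assoc, Nat.reduceAdd, remainder_three_mul_add_three,
        remainder_three_mul_add_four, remainder_three_mul_add_five,
        partialQuot_three_mul_add_three, U_succ n hc]
      push_cast
      ring
    · simp only [add_assoc, Nat.reduceAdd, remainder_three_mul_add_four,
        remainder_three_mul_add_five, remainder_three_mul_add_six,
        partialQuot_three_mul_add_four, V_succ n hc]
      push_cast
      ring

lemma remainder_pos {ℓ s : ℕ} (hℓ : 0 < ℓ) (hs : 1 ≤ s) (k : ℕ) : 0 < remainder ℓ s (k + 2) := by
  have hc : (0 : ℝ) < ℓ * s := by positivity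
  obtain ⟨n, rfl | rfl | rfl⟩ : ∃ n, k = 3 * n ∨ k = 3 * n + 1 ∨ k = 3 * n + 2 :=
    ⟨k / 3, by omega⟩
  · rw [remainder_three_mul_add_two]
    exact mul_pos (by positivity) (U_pos n hc)
  · have hsU : U (ℓ * s) n ≤ s * U (ℓ * s) n :=
      le_mul_of_one_le_left (U_pos n hc).le (by exact_mod_cast hs)
    rw [remainder_three_mul_add_three]
    linarith [two_mul_V_lt_U n hc, V_pos n hc]
  · rw [remainder_three_mul_add_four]
    exact V_pos n hc

lemma remainder_lt {ℓ s : ℕ} (hℓ : 2 ≤ ℓ) (hs : 1 ≤ s) (k : ℕ) :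
    remainder ℓ s (k + 2) < remainder ℓ s (k + 1) := by
  have hs1 : (1 : ℝ) ≤ s := by exact_mod_cast hs
  have hsc : (s : ℝ) + 1 ≤ ℓ * s := by
    have : (2 : ℝ) ≤ ℓ := by exact_mod_cast hℓ
    nlinarith
  have hc : (0 : ℝ) < ℓ * s := by linarith
  match k with
  | 0 =>
    simp only [remainder, Nat.zero_mod, Nat.zero_div, U_zero hc.ne']
    exact mul_exp_inv_sub_one_lt_one (by positivity) hsc
  | k + 1 =>
    obtain ⟨n, rfl | rfl | rfl⟩ : ∃ n, k = 3 * n ∨ k = 3 * n + 1 ∨ k = 3 * n + 2 :=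
      ⟨k / 3, by omega⟩
    · simp only [add_assoc, Nat.reduceAdd, remainder_three_mul_add_two,
        remainder_three_mul_add_three]
      linarith [V_pos n hc]
    · have hsU : U (ℓ * s) n ≤ s * U (ℓ * s) n := le_mul_of_one_le_left (U_pos n hc).le hs1
      simp only [add_assoc, Nat.reduceAdd, remainder_three_mul_add_three,
        remainder_three_mul_add_four]
      linarith [two_mul_V_lt_U n hc]
    · have hsn : (s : ℝ) ≤ ℓ * s * (n + 1) := by nlinarith
      simp only [add_assoc, Nat.reduceAdd, remainder_three_mul_add_four,
        remainder_three_mul_add_five]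
      nlinarith [mul_U_succ_lt_V n hc, U_pos (n + 1) hc]

theorem isRemainderSeq {ℓ s : ℕ} (hℓ : 2 ≤ ℓ) (hs : 1 ≤ s) :
    IsRemainderSeq (s * exp (1 / (ℓ * s))) (partialQuot ℓ s) (remainder ℓ s) :=
  ⟨rfl, rfl, remainder_eq_mul_add (by positivity), remainder_pos (by omega) hs,
    remainder_lt hℓ hs⟩

end Komatsu

theorem komatsu_integral_formulas (ℓ s : ℕ) (hℓ : 2 ≤ ℓ) (hs : 1 ≤ s) :
    let α : ℝ := (s : ℝ) * Real.exp (1 / ((ℓ : ℝ) * (s : ℝ)))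
    ∀ n : ℕ,
      (cfNum α (3 * n) - α * cfDen α (3 * n) =
        -(1 / ((ℓ : ℝ) * (s : ℝ)) ^ (n + 1)) *
          ∫ x in (0:ℝ)..1,
            (x ^ n * (x - 1) ^ n / (n.factorial : ℝ)) *
              ((s : ℝ) * Real.exp (x / ((ℓ : ℝ) * (s : ℝ)))) ) ∧
      (cfNum α (3 * n + 1) - α * cfDen α (3 * n + 1) =
        (1 / ((s : ℝ) * ((ℓ : ℝ) * (s : ℝ)) ^ (n + 1))) *
          ∫ x in (0:ℝ)..1,
            ((x + (s : ℝ) - 1) * x ^ n * (x - 1) ^ n / (n.factorial : ℝ)) *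
              ((s : ℝ) * Real.exp (x / ((ℓ : ℝ) * (s : ℝ)))) ) ∧
      (cfNum α (3 * n + 2) - α * cfDen α (3 * n + 2) =
        (1 / ((s : ℝ) * ((ℓ : ℝ) * (s : ℝ)) ^ (n + 1))) *
          ∫ x in (0:ℝ)..1,
            (x ^ n * (x - 1) ^ (n + 1) / (n.factorial : ℝ)) *
              ((s : ℝ) * Real.exp (x / ((ℓ : ℝ) * (s : ℝ)))) ) := by
  intro α n
  have h : IsRemainderSeq α (Komatsu.partialQuot ℓ s) (Komatsu.remainder ℓ s) :=
    Komatsu.isRemainderSeq hℓ hs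
  have hc : (ℓ : ℝ) * s ≠ 0 := by positivity
  simp only [cfNum, cfDen, h.nums_sub_mul_dens, Komatsu.integral_eq_U _ _ hc,
    Komatsu.integral_eq_V _ _ hc, Komatsu.integral_eq_U_sub_V _ _ hc]
  simp only [add_assoc, Nat.reduceAdd, Komatsu.remainder_three_mul_add_two,
    Komatsu.remainder_three_mul_add_three, Komatsu.remainder_three_mul_add_four]
  refine ⟨?_, ?_, ?_⟩ <;> rw [pow_add, pow_mul] <;> field_simp
  all_goals ring
end

section
/- Let s ≥ 1 be an integer. The regular continued fraction expansion of s·e^(1/s) is [a₀; a₁, a₂, ...] where a₀ = s + 1 and, for every integer k ≥ 0, a_{3k+1} = 2s − 1, a_{3k+2} = 2(k+1), and a_{3k+3} = 1. -/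
/-!
Set `x₀ = α` and `x_{3k+1} = p_k / q_k`, `x_{3k+2} = q_k / r_k`, `x_{3k+3} = r_k / p_{k+1}`.
The expansion says exactly that these are the complete quotients of `α`, i.e. that
`α = (s + 1) + q₀ / p₀` and
  `p_k = (2s - 1) q_k + r_k`,  `q_k = 2(k + 1) r_k + p_{k+1}`,  `r_k = p_{k+1} + q_{k+1}`,
with all of `p, q, r` positive (so that every `x_n > 1`). Such sequences are given by the
Hermite-type integrals `∫₀¹ w_k(t) φ(t) e^{t/s} dt` with `w_k(t) = (t(1 - t)/s)^k / k!`, namely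
`p_k` for `φ = s - 1 + t`, `q_k` for `φ = 1 - t`, and `r_k = s ∫₀¹ w_{k+1}(t) e^{t/s} dt`.
The recurrences are integrations by parts against `e^{t/s}`, with boundary terms vanishing
because `w_{k+1}(0) = w_{k+1}(1) = 0`.
-/

open Real Set intervalIntegral Nat

namespace GenContFract

theorem partDens_get?_of_stream_succ {K : Type*} [DivisionRing K] [LinearOrder K] [FloorRing K]
    {v f : K} {n : ℕ} {b : ℤ}
    (h : IntFractPair.stream v (n + 1) = some ⟨b, f⟩) :
    (GenContFract.of v).partDens.get? n = some (b : K) :=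
  partDen_eq_s_b (get?_of_eq_some_of_succ_get?_intFractPair_stream h)

variable {K : Type*} [Field K] [LinearOrder K] [IsStrictOrderedRing K] [FloorRing K]

theorem IntFractPair.of_intCast_add (z : ℤ) {f : K} (h0 : 0 ≤ f) (h1 : f < 1) :
    IntFractPair.of (z + f) = ⟨z, f⟩ := by
  simp only [IntFractPair.of, Int.floor_intCast_add, Int.fract_intCast_add,
    Int.floor_eq_zero_iff.2 ⟨h0, h1⟩, Int.fract_eq_self.2 ⟨h0, h1⟩, add_zero]

theorem IntFractPair.stream_succ_of_eq_mul_add {v x y z : K} {n : ℕ} {a b : ℤ}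
    (h : IntFractPair.stream v n = some ⟨a, y / x⟩) (hx : x = b * y + z) (hx0 : x ≠ 0)
    (hz : 0 ≤ z) (hzy : z < y) :
    IntFractPair.stream v (n + 1) = some ⟨b, z / y⟩ := by
  have hy : 0 < y := hz.trans_lt hzy
  have hinv : (y / x)⁻¹ = b + z / y := by
    rw [inv_div, hx, add_div, mul_div_cancel_right₀ _ hy.ne']
  rw [IntFractPair.stream_succ_of_some h (div_ne_zero hy.ne' hx0), hinv,
    IntFractPair.of_intCast_add b (div_nonneg hz hy.le) ((div_lt_one hy).2 hzy)]

section Remainders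

variable {v : K} {a₀ c : ℤ} {p q r : ℕ → K}

theorem IntFractPair.stream_three_steps_of_remainders (hp : ∀ k, 0 < p k) (hr : ∀ k, 0 < r k)
    (hc : 1 ≤ c) (hpq : ∀ k, p k = c * q k + r k) (hqr : ∀ k, q k = 2 * (k + 1) * r k + p (k + 1))
    (hrp : ∀ k, r k = p (k + 1) + q (k + 1)) {k : ℕ} {a : ℤ}
    (h : IntFractPair.stream v (3 * k) = some ⟨a, q k / p k⟩) :
    IntFractPair.stream v (3 * k + 1) = some ⟨c, r k / q k⟩ ∧
      IntFractPair.stream v (3 * k + 2) = some ⟨2 * (k + 1), p (k + 1) / r k⟩ ∧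
      IntFractPair.stream v (3 * k + 3) = some ⟨1, q (k + 1) / p (k + 1)⟩ := by
  have hq : ∀ k, 0 < q k := fun k => by
    linarith [hqr k, hp (k + 1), hr k, mul_nonneg (k.cast_nonneg (α := K)) (hr k).le]
  have hcq : 0 ≤ ((c : K) - 1) * q (k + 1) :=
    mul_nonneg (sub_nonneg.2 (by exact_mod_cast hc)) (hq (k + 1)).le
  have h1 := stream_succ_of_eq_mul_add h (hpq k) (hp k).ne' (hr k).le
    (by linarith [hqr k, hp (k + 1), hr k, mul_nonneg k.cast_nonneg (hr k).le])
  have h2 := stream_succ_of_eq_mul_add (b := 2 * (k + 1)) h1 (by push_cast; exact hqr k)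
    (hq k).ne' (hp (k + 1)).le (by linarith [hrp k, hq (k + 1)])
  have h3 := stream_succ_of_eq_mul_add (b := 1) h2 (by rw [Int.cast_one, one_mul]; exact hrp k)
    (hr k).ne' (hq (k + 1)).le (by linarith [hpq (k + 1), hr (k + 1)])
  exact ⟨h1, h2, h3⟩

theorem IntFractPair.of_eq_of_remainders (hp : ∀ k, 0 < p k) (hr : ∀ k, 0 < r k) (hc : 1 ≤ c)
    (hv : v = a₀ + q 0 / p 0) (hpq : ∀ k, p k = c * q k + r k)
    (hqr : ∀ k, q k = 2 * (k + 1) * r k + p (k + 1)) :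
    IntFractPair.of v = ⟨a₀, q 0 / p 0⟩ := by
  have hq : 0 < q 0 := by
    have h := hqr 0
    rw [Nat.cast_zero, zero_add] at h
    linarith [hp 1, hr 0]
  have hc' : (1 : K) ≤ c := by exact_mod_cast hc
  have hqp : q 0 < p 0 := by linarith [hpq 0, hr 0, mul_nonneg (sub_nonneg.2 hc') hq.le]
  rw [hv, of_intCast_add a₀ (div_nonneg hq.le (hp 0).le) ((div_lt_one (hp 0)).2 hqp)]

theorem IntFractPair.exists_stream_three_mul_of_remainders (hp : ∀ k, 0 < p k) (hr : ∀ k, 0 < r k)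
    (hc : 1 ≤ c) (hv : v = a₀ + q 0 / p 0) (hpq : ∀ k, p k = c * q k + r k)
    (hqr : ∀ k, q k = 2 * (k + 1) * r k + p (k + 1)) (hrp : ∀ k, r k = p (k + 1) + q (k + 1))
    (k : ℕ) : ∃ a : ℤ, IntFractPair.stream v (3 * k) = some ⟨a, q k / p k⟩ := by
  induction k with
  | zero => exact ⟨a₀, by rw [stream_zero, of_eq_of_remainders hp hr hc hv hpq hqr]⟩
  | succ k ih =>
    obtain ⟨a, h⟩ := ih
    exact ⟨1, (stream_three_steps_of_remainders hp hr hc hpq hqr hrp h).2.2⟩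

theorem of_h_partDens_of_remainders (hp : ∀ k, 0 < p k) (hr : ∀ k, 0 < r k)
    (hc : 1 ≤ c) (hv : v = a₀ + q 0 / p 0) (hpq : ∀ k, p k = c * q k + r k)
    (hqr : ∀ k, q k = 2 * (k + 1) * r k + p (k + 1)) (hrp : ∀ k, r k = p (k + 1) + q (k + 1)) :
    (GenContFract.of v).h = a₀ ∧
      ∀ k : ℕ,
        (GenContFract.of v).partDens.get? (3 * k) = some (c : K) ∧
        (GenContFract.of v).partDens.get? (3 * k + 1) = some (2 * ((k : K) + 1)) ∧
        (GenContFract.of v).partDens.get? (3 * k + 2) = some 1 := by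
  refine ⟨?_, fun k => ?_⟩
  · rw [of_h_eq_intFractPair_seq1_fst_b, IntFractPair.seq1_fst_eq_of,
      IntFractPair.of_eq_of_remainders hp hr hc hv hpq hqr]
  obtain ⟨a, h⟩ := IntFractPair.exists_stream_three_mul_of_remainders hp hr hc hv hpq hqr hrp k
  obtain ⟨h1, h2, h3⟩ := IntFractPair.stream_three_steps_of_remainders hp hr hc hpq hqr hrp h
  refine ⟨partDens_get?_of_stream_succ h1, ?_, ?_⟩
  · simpa using partDens_get?_of_stream_succ h2
  · simpa using partDens_get?_of_stream_succ h3

end Remainders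

end GenContFract

theorem integral_deriv_add_div_mul_exp_s7 {P P' : ℝ → ℝ} {a b S : ℝ}
    (hP : ∀ t, HasDerivAt P (P' t) t) (hP' : Continuous P') :
    ∫ t in a..b, (P' t + P t / S) * exp (t / S) = P b * exp (b / S) - P a * exp (a / S) := by
  have hPc : Continuous P := continuous_iff_continuousAt.2 fun t => (hP t).continuousAt
  refine integral_eq_sub_of_hasDerivAt (f := fun t => P t * exp (t / S)) (fun t _ => ?_)
    ((by fun_prop : Continuous fun t => (P' t + P t / S) * exp (t / S)).intervalIntegrable a b)
  exact ((hP t).mul ((hasDerivAt_id t).div_const S).exp).congr_deriv (by simp only [id]; ring)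

theorem integral_mul_exp_eq_of_eq_add_deriv {f g h P P' : ℝ → ℝ} {a S : ℝ}
    (hg : Continuous g) (hh : Continuous h) (hP : ∀ t, HasDerivAt P (P' t) t)
    (hP' : Continuous P') (hP0 : P 0 = 0) (hP1 : P 1 = 0)
    (hf : ∀ t, f t = a * g t + h t + (P' t + P t / S)) :
    ∫ t in (0 : ℝ)..1, f t * exp (t / S) =
      a * (∫ t in (0 : ℝ)..1, g t * exp (t / S)) + ∫ t in (0 : ℝ)..1, h t * exp (t / S) := by
  have hPc : Continuous P := continuous_iff_continuousAt.2 fun t => (hP t).continuousAt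
  have hint : ∀ u : ℝ → ℝ, Continuous u →
      IntervalIntegrable (fun t => u t * exp (t / S)) MeasureTheory.volume 0 1 :=
    fun u hu => (by fun_prop : Continuous _).intervalIntegrable 0 1
  calc ∫ t in (0 : ℝ)..1, f t * exp (t / S)
      = ∫ t in (0 : ℝ)..1, (a * (g t * exp (t / S)) + h t * exp (t / S) +
          (P' t + P t / S) * exp (t / S)) := integral_congr fun t _ => by simp only [hf]; ring
    _ = _ := by
      rw [integral_add (((hint g hg).const_mul a).add (hint h hh)) (hint _ (by fun_prop)),
        integral_add ((hint g hg).const_mul a) (hint h hh), integral_const_mul,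
        integral_deriv_add_div_mul_exp_s7 hP hP', hP0, hP1]
      simp only [zero_mul, sub_zero, add_zero]

namespace ExpContFract

noncomputable def weight (S : ℝ) (k : ℕ) (t : ℝ) : ℝ := (t * (1 - t) / S) ^ k / k !

noncomputable def p (S : ℝ) (k : ℕ) : ℝ :=
  ∫ t in (0 : ℝ)..1, weight S k t * (S - 1 + t) * exp (t / S)

noncomputable def q (S : ℝ) (k : ℕ) : ℝ :=
  ∫ t in (0 : ℝ)..1, weight S k t * (1 - t) * exp (t / S)

noncomputable def r (S : ℝ) (k : ℕ) : ℝ :=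
  ∫ t in (0 : ℝ)..1, S * weight S (k + 1) t * exp (t / S)

variable {S : ℝ} (k : ℕ)

@[fun_prop]
theorem continuous_weight : Continuous (weight S k) := by
  unfold weight; fun_prop

theorem weight_succ (t : ℝ) :
    weight S (k + 1) t = weight S k t * (t * (1 - t) / S) / (k + 1) := by
  simp only [weight, pow_succ, Nat.factorial_succ, Nat.cast_mul, Nat.cast_succ]
  field_simp

theorem hasDerivAt_weight_succ (t : ℝ) :
    HasDerivAt (weight S (k + 1)) (weight S k t * (1 - 2 * t) / S) t := by
  have hu : HasDerivAt (fun x : ℝ => x * (1 - x) / S) ((1 - 2 * t) / S) t :=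
    (((hasDerivAt_id' t).mul ((hasDerivAt_id' t).const_sub 1)).div_const S).congr_deriv (by ring)
  refine ((hu.pow (k + 1)).div_const ((k + 1)! : ℝ)).congr_deriv ?_
  simp only [weight, Nat.factorial_succ, Nat.cast_mul, Nat.cast_succ, Nat.add_sub_cancel]
  field_simp

theorem weight_succ_zero : weight S (k + 1) 0 = 0 := by simp [weight]

theorem weight_succ_one : weight S (k + 1) 1 = 0 := by simp [weight]

theorem weight_pos (hS : 0 < S) {t : ℝ} (ht : t ∈ Ioo 0 1) : 0 < weight S k t := by
  have : 0 < t * (1 - t) := mul_pos ht.1 (sub_pos.2 ht.2)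
  unfold weight; positivity

theorem p_pos (hS : 1 ≤ S) : 0 < p S k :=
  intervalIntegral_pos_of_pos_on (Continuous.intervalIntegrable (by fun_prop) 0 1)
    (fun t ht => by have := weight_pos k (by linarith) ht; have := ht.1; positivity) one_pos

theorem r_pos (hS : 0 < S) : 0 < r S k :=
  intervalIntegral_pos_of_pos_on (Continuous.intervalIntegrable (by fun_prop) 0 1)
    (fun t ht => by have := weight_pos (k + 1) hS ht; positivity) one_pos

theorem p_eq : p S k = (2 * S - 1) * q S k + r S k :=
  integral_mul_exp_eq_of_eq_add_deriv (by fun_prop) (by fun_prop)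
    (fun t => (hasDerivAt_weight_succ (S := S) k t).const_mul (-S ^ 2)) (by fun_prop)
    (by simp [weight_succ_zero]) (by simp [weight_succ_one])
    (fun t => by field_simp; ring)

theorem q_eq (hS : S ≠ 0) : q S k = 2 * (k + 1) * r S k + p S (k + 1) :=
  integral_mul_exp_eq_of_eq_add_deriv (by fun_prop) (by fun_prop)
    (fun t => ((hasDerivAt_weight_succ (S := S) k t).mul
      ((hasDerivAt_id' t).const_sub 1)).const_mul S)
    (by fun_prop) (by simp [weight_succ_zero]) (by simp [weight_succ_one])
    (fun t => by simp only [Pi.mul_apply, weight_succ]; field_simp; ring)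

theorem r_eq : r S k = p S (k + 1) + q S (k + 1) := by
  rw [p, q, ← integral_add (Continuous.intervalIntegrable (by fun_prop) 0 1)
    (Continuous.intervalIntegrable (by fun_prop) 0 1)]
  exact integral_congr fun t _ => by ring

theorem p_zero (hS : S ≠ 0) : p S 0 = S := by
  have hP (t : ℝ) : HasDerivAt (fun t => S * t - S) S t :=
    (((hasDerivAt_id' t).const_mul S).sub_const S).congr_deriv (mul_one S)
  calc p S 0 = ∫ t in (0 : ℝ)..1, (S + (S * t - S) / S) * exp (t / S) :=
        integral_congr fun t _ => by simp only [weight]; field_simp; ring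
    _ = S := by
      rw [integral_deriv_add_div_mul_exp_s7 hP continuous_const]
      simp

theorem q_zero (hS : S ≠ 0) : q S 0 = S * (S * exp (1 / S)) - S ^ 2 - S := by
  have hP (t : ℝ) : HasDerivAt (fun t => S ^ 2 + S - S * t) (-S) t :=
    (((hasDerivAt_id' t).const_mul S).const_sub (S ^ 2 + S)).congr_deriv (by ring)
  calc q S 0 = ∫ t in (0 : ℝ)..1, (-S + (S ^ 2 + S - S * t) / S) * exp (t / S) :=
        integral_congr fun t _ => by simp only [weight]; field_simp; ring
    _ = S * (S * exp (1 / S)) - S ^ 2 - S := by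
      rw [integral_deriv_add_div_mul_exp_s7 hP continuous_const]
      simp only [mul_one, zero_div, exp_zero, one_div]
      ring

end ExpContFract

theorem contFract_of_s_exp_one_div_s (s : ℕ) (hs : 1 ≤ s) :
    let α : ℝ := (s : ℝ) * Real.exp (1 / (s : ℝ))
    (GenContFract.of α).h = (s : ℝ) + 1 ∧
      ∀ k : ℕ,
        (GenContFract.of α).partDens.get? (3 * k) = some (2 * (s : ℝ) - 1) ∧
        (GenContFract.of α).partDens.get? (3 * k + 1) = some (2 * ((k : ℝ) + 1)) ∧
        (GenContFract.of α).partDens.get? (3 * k + 2) = some 1 := by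
  intro α
  have hS : (1 : ℝ) ≤ s := by exact_mod_cast hs
  have hS0 : (s : ℝ) ≠ 0 := by positivity
  have hα : α = ((s + 1 : ℤ) : ℝ) + ExpContFract.q s 0 / ExpContFract.p s 0 := by
    rw [ExpContFract.p_zero hS0, ExpContFract.q_zero hS0]
    push_cast
    field_simp
    ring
  obtain ⟨hh, hk⟩ := GenContFract.of_h_partDens_of_remainders (c := 2 * s - 1)
    (fun k => ExpContFract.p_pos k hS) (fun k => ExpContFract.r_pos k (by linarith)) (by omega)
    hα (fun k => by push_cast; exact ExpContFract.p_eq k) (fun k => ExpContFract.q_eq k hS0)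
    ExpContFract.r_eq
  refine ⟨by exact_mod_cast hh, fun k => ?_⟩
  simpa using hk k
end

section
/- Let pₙ*/qₙ* denote the nth convergent of the regular continued fraction expansion of e. Then ∑_{n≥0} |pₙ* − e·qₙ*| = 2·e·∫₀¹ e^(−t²) dt − e. -/
/-!
For any `α`, the errors `Eₙ₊₁ = |pₙ - α qₙ|` (with `E₀ = 1`) obey the Euclid recurrence
`Eₙ = bₙ Eₙ₊₁ + Eₙ₊₂` in the partial quotients `bₙ` of `α`; conversely, any positive sequence
obeying such a recurrence with integers `bₙ ≥ 1`, and with `α = a₀ + E₁ / E₀` for an integer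
`a₀`, pins down the continued fraction of `α`. For `e = [2; 1, 2, 1, 1, 4, 1, 1, 6, …]` the errors
are Hermite's integrals `J m l = ∫₀¹ xᵐ (1 - x)ˡ eˣ dx` normalised by factorials:
`E₃ₖ = J (k+1) k / k!`, `E₃ₖ₊₁ = J k (k+1) / k!`, `E₃ₖ₊₂ = Aₖ₊₁` with `Aₖ = J k k / k!`,
and the recurrence is integration by parts. Since `E₃ₖ + E₃ₖ₊₁ = Aₖ`, summing over residue classes
mod 3 gives `∑ Eₙ = 2 ∑ Aₖ - A₀`, and expanding `exp (x (1 - x))` in its power series gives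
`∑ Aₖ = ∫₀¹ e^{x (1 - x) + x} dx = e ∫₀¹ e^{-t²} dt`.
-/

open Real

theorem hasSum_of_hasSum_residues {f : ℕ → ℝ} (hf : ∀ n, 0 ≤ f n) {N : ℕ} [NeZero N]
    {a : Fin N → ℝ} (h : ∀ j : Fin N, HasSum (fun k ↦ f (k * N + j)) (a j)) :
    HasSum f (∑ j, a j) := by
  let g : ℕ × Fin N → ℝ := fun p ↦ f (p.1 * N + p.2)
  have hfibers : HasSum (fun k ↦ ∑ j : Fin N, g (k, j)) (∑ j, a j) := hasSum_sum fun j _ ↦ h j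
  have hg : Summable g := (summable_prod_of_nonneg fun _ ↦ hf _).2
    ⟨fun _ ↦ .of_finite, by simpa only [tsum_fintype] using hfibers.summable⟩
  have hgsum := hg.hasSum.prod_fiberwise fun k ↦ hasSum_fintype fun j ↦ g (k, j)
  rw [← (Nat.divModEquiv N).symm.hasSum_iff, hfibers.unique hgsum]
  exact hg.hasSum

section EuclidRemainders

open GenContFract

variable {K : Type*} [Field K] [LinearOrder K]

structure IsEuclidRemainders (E : ℕ → K) (b : ℕ → ℤ) : Prop where
  pos : ∀ n, 0 < E n
  one_le : ∀ n, 1 ≤ b n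
  eq_add : ∀ n, E n = b n * E (n + 1) + E (n + 2)

namespace IsEuclidRemainders

variable {E : ℕ → K} {b : ℕ → ℤ}

theorem shift (hE : IsEuclidRemainders E b) :
    IsEuclidRemainders (fun n ↦ E (n + 1)) (fun n ↦ b (n + 1)) :=
  ⟨fun _ ↦ hE.pos _, fun _ ↦ hE.one_le _, fun _ ↦ hE.eq_add _⟩

theorem inv_div_eq (hE : IsEuclidRemainders E b) :
    (E 1 / E 0)⁻¹ = b 0 + E 2 / E 1 := by
  rw [inv_div, hE.eq_add 0]
  field_simp [(hE.pos 1).ne']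

variable [IsStrictOrderedRing K]

theorem lt_self (hE : IsEuclidRemainders E b) (n : ℕ) : E (n + 1) < E n := by
  have hb : (1 : K) ≤ b n := mod_cast hE.one_le n
  nlinarith [hE.eq_add n, hE.pos (n + 1), hE.pos (n + 2)]

theorem div_mem_Ico (hE : IsEuclidRemainders E b) (n : ℕ) :
    E (n + 1) / E n ∈ Set.Ico 0 1 :=
  ⟨(div_pos (hE.pos _) (hE.pos _)).le, (div_lt_one (hE.pos n)).2 (hE.lt_self n)⟩

variable [FloorRing K]

theorem floor_intCast_add_div (hE : IsEuclidRemainders E b) (h : ℤ) (n : ℕ) :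
    ⌊(h : K) + E (n + 1) / E n⌋ = h := by
  rw [Int.floor_intCast_add, Int.floor_eq_zero_iff.2 (hE.div_mem_Ico n), add_zero]

theorem fract_intCast_add_div (hE : IsEuclidRemainders E b) (h : ℤ) (n : ℕ) :
    Int.fract ((h : K) + E (n + 1) / E n) = E (n + 1) / E n := by
  rw [Int.fract_intCast_add, Int.fract_eq_self.2 (hE.div_mem_Ico n)]

theorem genContFract_of_s_get? (hE : IsEuclidRemainders E b) {α : K} {h : ℤ}
    (hα : α = h + E 1 / E 0) (n : ℕ) : (GenContFract.of α).s.get? n = some ⟨1, b n⟩ := by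
  subst hα
  induction n generalizing E b h with
  | zero =>
    have hfract := hE.fract_intCast_add_div h 0
    have hne : Int.fract ((h : K) + E 1 / E 0) ≠ 0 := by
      rw [hfract]; exact (div_pos (hE.pos 1) (hE.pos 0)).ne'
    change (GenContFract.of _).s.head = _
    rw [of_s_head hne, hfract, hE.inv_div_eq, hE.shift.floor_intCast_add_div (b 0) 0]
  | succ n ih =>
    rw [of_s_succ, hE.fract_intCast_add_div h 0, hE.inv_div_eq]
    exact ih hE.shift

theorem genContFract_nums_sub_mul_dens (hE : IsEuclidRemainders E b) {α : K} {h : ℤ}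
    (hα : α = h + E 1 / E 0) (n : ℕ) :
    (GenContFract.of α).nums n - α * (GenContFract.of α).dens n =
      (-1) ^ (n + 1) * E (n + 1) / E 0 := by
  have hE0 := (hE.pos 0).ne'
  have hαE : (α - h) * E 0 = E 1 := by rw [hα]; field_simp; ring
  have hs := hE.genContFract_of_s_get? hα
  rw [eq_div_iff hE0]
  induction n using Nat.twoStepInduction with
  | zero =>
    rw [zeroth_num_eq_h, zeroth_den_eq_one, of_h_eq_floor, hα, hE.floor_intCast_add_div h 0,
      ← hα]
    linear_combination -hαE
  | one =>
    rw [first_num_eq (hs 0), first_den_eq (hs 0), of_h_eq_floor, hα,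
      hE.floor_intCast_add_div h 0, ← hα]
    linear_combination -(b 0 : K) * hαE + hE.eq_add 0
  | more n ih₁ ih₂ =>
    rw [nums_recurrence (hs (n + 1)) rfl rfl, dens_recurrence (hs (n + 1)) rfl rfl]
    linear_combination (b (n + 1) : K) * ih₂ + ih₁ + (-1) ^ (n + 1) * hE.eq_add (n + 1)

theorem abs_genContFract_nums_sub_mul_dens (hE : IsEuclidRemainders E b) {α : K} {h : ℤ}
    (hα : α = h + E 1 / E 0) (n : ℕ) :
    |(GenContFract.of α).nums n - α * (GenContFract.of α).dens n| = E (n + 1) / E 0 := by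
  rw [hE.genContFract_nums_sub_mul_dens hα, abs_div, abs_mul, abs_pow, abs_neg, abs_one, one_pow,
    one_mul, abs_of_pos (hE.pos _), abs_of_pos (hE.pos _)]

end IsEuclidRemainders

end EuclidRemainders

open intervalIntegral
open scoped Nat

noncomputable def hermiteIntegral (m l : ℕ) : ℝ := ∫ x in (0 : ℝ)..1, x ^ m * (1 - x) ^ l * exp x

theorem intervalIntegrable_hermiteIntegrand (m l : ℕ) :
    IntervalIntegrable (fun x : ℝ ↦ x ^ m * (1 - x) ^ l * exp x) MeasureTheory.volume 0 1 :=
  (by fun_prop : Continuous _).intervalIntegrable 0 1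

theorem hermiteIntegral_pos (m l : ℕ) : 0 < hermiteIntegral m l := by
  refine intervalIntegral_pos_of_pos_on (intervalIntegrable_hermiteIntegrand m l)
    (fun x hx ↦ ?_) zero_lt_one
  have : 0 < 1 - x := by linarith [hx.2]
  have : 0 < x := hx.1
  positivity

theorem hermiteIntegral_eq_add (m l : ℕ) :
    hermiteIntegral m l = hermiteIntegral m (l + 1) + hermiteIntegral (m + 1) l := by
  simp only [hermiteIntegral]
  rw [← integral_add (intervalIntegrable_hermiteIntegrand _ _)
    (intervalIntegrable_hermiteIntegrand _ _)]
  congr 1 with x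
  ring

/-- The fundamental theorem of calculus for `x ^ (m + 1) * (1 - x) ^ (l + 1) * exp x`, which
vanishes at both endpoints. -/
theorem hermiteIntegral_by_parts (m l : ℕ) :
    (m + 1) * hermiteIntegral m (l + 1) + hermiteIntegral (m + 1) (l + 1) =
      (l + 1) * hermiteIntegral (m + 1) l := by
  have hderiv : ∀ x ∈ Set.uIcc (0 : ℝ) 1, HasDerivAt
      (fun y ↦ y ^ (m + 1) * (1 - y) ^ (l + 1) * exp y)
      ((m + 1) * (x ^ m * (1 - x) ^ (l + 1) * exp x) + x ^ (m + 1) * (1 - x) ^ (l + 1) * exp x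
        - (l + 1) * (x ^ (m + 1) * (1 - x) ^ l * exp x)) x := by
    intro x _
    have h₁ := hasDerivAt_pow (m + 1) x
    have h₂ := ((hasDerivAt_id' x).const_sub 1).fun_pow (l + 1)
    refine ((h₁.fun_mul h₂).fun_mul (hasDerivAt_exp x)).congr_deriv ?_
    simp only [Nat.add_sub_cancel]
    push_cast
    ring
  have hftc := integral_eq_sub_of_hasDerivAt hderiv
    ((by fun_prop : Continuous _).intervalIntegrable 0 1)
  have hI := intervalIntegrable_hermiteIntegrand
  rw [integral_sub (((hI _ _).const_mul _).add (hI _ _)) ((hI _ _).const_mul _),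
    integral_add ((hI _ _).const_mul _) (hI _ _), integral_const_mul, integral_const_mul] at hftc
  simp only [hermiteIntegral]
  norm_num at hftc
  linarith

theorem hermiteIntegral_zero_zero : hermiteIntegral 0 0 = exp 1 - 1 := by
  simp [hermiteIntegral]

theorem hermiteIntegral_one_zero : hermiteIntegral 1 0 = 1 := by
  have hderiv : ∀ x ∈ Set.uIcc (0 : ℝ) 1,
      HasDerivAt (fun y ↦ (y - 1) * exp y) (x ^ 1 * (1 - x) ^ 0 * exp x) x := fun x _ ↦ by
    refine (((hasDerivAt_id' x).sub_const 1).fun_mul (hasDerivAt_exp x)).congr_deriv ?_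
    ring
  rw [hermiteIntegral, integral_eq_sub_of_hasDerivAt hderiv
    (intervalIntegrable_hermiteIntegrand 1 0)]
  simp

noncomputable def hermiteA (n : ℕ) : ℝ := hermiteIntegral n n / n !
noncomputable def hermiteB (n : ℕ) : ℝ := hermiteIntegral (n + 1) n / n !
noncomputable def hermiteC (n : ℕ) : ℝ := hermiteIntegral n (n + 1) / n !

theorem hermiteA_pos (n : ℕ) : 0 < hermiteA n := div_pos (hermiteIntegral_pos _ _) (by positivity)
theorem hermiteB_pos (n : ℕ) : 0 < hermiteB n := div_pos (hermiteIntegral_pos _ _) (by positivity)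
theorem hermiteC_pos (n : ℕ) : 0 < hermiteC n := div_pos (hermiteIntegral_pos _ _) (by positivity)

theorem hermiteA_eq_add (n : ℕ) : hermiteA n = hermiteB n + hermiteC n := by
  rw [hermiteA, hermiteB, hermiteC, hermiteIntegral_eq_add, add_div, add_comm]

theorem hermiteA_succ (n : ℕ) : hermiteA (n + 1) = hermiteB n - hermiteC n := by
  have h := hermiteIntegral_by_parts n n
  rw [hermiteA, hermiteB, hermiteC, Nat.factorial_succ]
  push_cast
  field_simp
  linear_combination h

theorem hermiteC_eq (n : ℕ) :
    hermiteC n = (2 * n + 2) * hermiteA (n + 1) + hermiteB (n + 1) := by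
  have h₁ := hermiteIntegral_by_parts n n
  have h₂ := hermiteIntegral_by_parts (n + 1) n
  have hs := hermiteIntegral_eq_add (n + 1) n
  rw [hermiteA, hermiteB, hermiteC, Nat.factorial_succ]
  push_cast at h₁ h₂ hs ⊢
  field_simp
  linear_combination h₁ - h₂ + (n + 1) * hs

theorem hermiteA_zero : hermiteA 0 = exp 1 - 1 := by
  simp [hermiteA, hermiteIntegral_zero_zero]

theorem hermiteB_zero : hermiteB 0 = 1 := by
  simp [hermiteB, hermiteIntegral_one_zero]

theorem hermiteC_zero : hermiteC 0 = exp 1 - 2 := by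
  linarith [hermiteA_eq_add 0, hermiteA_zero, hermiteB_zero]

theorem integral_exp_mul_one_sub_mul_exp :
    ∫ x in (0 : ℝ)..1, exp (x * (1 - x)) * exp x = exp 1 * ∫ t in (0 : ℝ)..1, exp (-t ^ 2) := by
  have hsub := integral_comp_sub_left (fun t ↦ exp (-t ^ 2)) (a := 0) (b := 1) (1 : ℝ)
  norm_num at hsub
  rw [← hsub, ← integral_const_mul]
  congr 1 with x
  rw [← exp_add, ← exp_add]
  ring_nf

theorem hasSum_hermiteA : HasSum hermiteA (exp 1 * ∫ t in (0 : ℝ)..1, exp (-t ^ 2)) := by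
  have hterm (n : ℕ) : hermiteA n = ∫ x in (0 : ℝ)..1, (x * (1 - x)) ^ n / n ! * exp x := by
    rw [hermiteA, hermiteIntegral, ← integral_div]
    congr 1 with x
    rw [mul_pow]
    ring
  have hseries (x : ℝ) :
      HasSum (fun n ↦ (x * (1 - x)) ^ n / n ! * exp x) (exp (x * (1 - x)) * exp x) := by
    have := NormedSpace.expSeries_div_hasSum_exp (x * (1 - x))
    rw [← exp_eq_exp_ℝ] at this
    exact this.mul_right _
  rw [funext hterm, ← integral_exp_mul_one_sub_mul_exp]
  refine hasSum_integral_of_dominated_convergence (fun n x ↦ (x * (1 - x)) ^ n / n ! * exp x)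
    (fun n ↦ by fun_prop) (fun n ↦ ?_) (.of_forall fun x _ ↦ (hseries x).summable) ?_
    (.of_forall fun x _ ↦ hseries x)
  · refine .of_forall fun x hx ↦ (Real.norm_of_nonneg ?_).le
    rw [Set.uIoc_of_le zero_le_one] at hx
    have : 0 ≤ 1 - x := by linarith [hx.2]
    have := hx.1.le
    positivity
  · simp_rw [(hseries _).tsum_eq]
    exact (by fun_prop : Continuous _).intervalIntegrable 0 1

noncomputable def eRemainder (n : ℕ) : ℝ :=
  if n % 3 = 0 then hermiteB (n / 3)
  else if n % 3 = 1 then hermiteC (n / 3)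
  else hermiteA (n / 3 + 1)

def ePartialQuotient (n : ℕ) : ℤ := if n % 3 = 1 then 2 * (n / 3 : ℕ) + 2 else 1

theorem eRemainder_three_mul (k : ℕ) : eRemainder (3 * k) = hermiteB k := by
  simp [eRemainder]

theorem eRemainder_three_mul_add_one (k : ℕ) : eRemainder (3 * k + 1) = hermiteC k := by
  rw [eRemainder, if_neg (by omega), if_pos (by omega), show (3 * k + 1) / 3 = k by omega]

theorem eRemainder_three_mul_add_two (k : ℕ) : eRemainder (3 * k + 2) = hermiteA (k + 1) := by
  rw [eRemainder, if_neg (by omega), if_neg (by omega), show (3 * k + 2) / 3 = k by omega]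

theorem ePartialQuotient_three_mul_add_one (k : ℕ) :
    ePartialQuotient (3 * k + 1) = 2 * k + 2 := by
  rw [ePartialQuotient, if_pos (by omega), show (3 * k + 1) / 3 = k by omega]

theorem ePartialQuotient_of_mod_ne_one {n : ℕ} (hn : n % 3 ≠ 1) : ePartialQuotient n = 1 := by
  simp [ePartialQuotient, hn]

theorem isEuclidRemainders_eRemainder : IsEuclidRemainders eRemainder ePartialQuotient where
  pos n := by
    unfold eRemainder
    split_ifs
    exacts [hermiteB_pos _, hermiteC_pos _, hermiteA_pos _]
  one_le n := by
    unfold ePartialQuotient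
    split_ifs <;> omega
  eq_add n := by
    obtain ⟨k, rfl | rfl | rfl⟩ : ∃ k, n = 3 * k ∨ n = 3 * k + 1 ∨ n = 3 * k + 2 :=
      ⟨n / 3, by omega⟩
    · rw [ePartialQuotient_of_mod_ne_one (by omega), eRemainder_three_mul,
        eRemainder_three_mul_add_one, eRemainder_three_mul_add_two, hermiteA_succ]
      ring
    · rw [ePartialQuotient_three_mul_add_one, show 3 * k + 1 + 2 = 3 * (k + 1) by ring,
        eRemainder_three_mul_add_one, eRemainder_three_mul_add_two, eRemainder_three_mul,
        hermiteC_eq]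
      push_cast
      ring
    · rw [ePartialQuotient_of_mod_ne_one (by omega), show 3 * k + 2 + 1 = 3 * (k + 1) by ring,
        show 3 * k + 2 + 2 = 3 * (k + 1) + 1 by ring, eRemainder_three_mul_add_two,
        eRemainder_three_mul, eRemainder_three_mul_add_one, hermiteA_eq_add]
      ring

theorem hasSum_eRemainder {S : ℝ} (hS : HasSum hermiteA S) :
    HasSum eRemainder (2 * S - hermiteA 0) := by
  have hB : Summable hermiteB := hS.summable.of_nonneg_of_le
    (fun n ↦ (hermiteB_pos n).le) fun n ↦ by linarith [hermiteA_eq_add n, hermiteC_pos n]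
  have hC : Summable hermiteC := hS.summable.of_nonneg_of_le
    (fun n ↦ (hermiteC_pos n).le) fun n ↦ by linarith [hermiteA_eq_add n, hermiteB_pos n]
  have hBC : ∑' k, hermiteB k + ∑' k, hermiteC k = S := by
    rw [← hB.tsum_add hC, ← hS.tsum_eq]
    exact tsum_congr fun k ↦ (hermiteA_eq_add k).symm
  have hA : HasSum (fun k ↦ hermiteA (k + 1)) (S - hermiteA 0) := by
    simpa using (hasSum_nat_add_iff' 1).2 hS
  have := hasSum_of_hasSum_residues (N := 3)
    (a := ![∑' k, hermiteB k, ∑' k, hermiteC k, S - hermiteA 0])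
    (fun n ↦ (isEuclidRemainders_eRemainder.pos n).le) fun j ↦ by
      fin_cases j
      · simpa [mul_comm _ 3, eRemainder_three_mul] using hB.hasSum
      · simpa [mul_comm _ 3, eRemainder_three_mul_add_one] using hC.hasSum
      · simpa [mul_comm _ 3, eRemainder_three_mul_add_two] using hA
  convert this using 1
  simp only [Fin.sum_univ_three, Fin.isValue, Matrix.cons_val_zero, Matrix.cons_val_one,
    Matrix.cons_val]
  linarith

theorem errorSum_e :
    (∑' n : ℕ, |cfNum (Real.exp 1) n - Real.exp 1 * cfDen (Real.exp 1) n|) =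
      2 * Real.exp 1 * (∫ t in (0:ℝ)..1, Real.exp (-t ^ 2)) - Real.exp 1 := by
  have hE₀ : eRemainder 0 = 1 := by simpa [hermiteB_zero] using eRemainder_three_mul 0
  have hE₁ : eRemainder 1 = exp 1 - 2 := by
    simpa [hermiteC_zero] using eRemainder_three_mul_add_one 0
  have he : exp 1 = ((2 : ℤ) : ℝ) + eRemainder 1 / eRemainder 0 := by
    rw [hE₀, hE₁]
    ring
  have habs (n : ℕ) :
      |cfNum (exp 1) n - exp 1 * cfDen (exp 1) n| = eRemainder (n + 1) := by
    rw [cfNum, cfDen, isEuclidRemainders_eRemainder.abs_genContFract_nums_sub_mul_dens he, hE₀,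
      div_one]
  rw [tsum_congr habs, ((hasSum_nat_add_iff' 1).2 (hasSum_eRemainder hasSum_hermiteA)).tsum_eq,
    Finset.sum_range_one, hE₀, hermiteA_zero]
  ring
end

section
/- The series identity ∑_{n≥0} (−1)^(n+1) / ((n+1)! · (2n+1)) = 1 − e^(−1) − 2·∫₀¹ e^(−t²) dt holds. -/
/-!
Integrating `exp (-t²) = ∑ (-t²)ⁿ / n!` term by term over `[0, b]` (dominated by the summable
constants `b²ⁿ / n!`) gives `∫₀ᵇ exp (-t²) = ∑ (-1)ⁿ b²ⁿ⁺¹ / (n! (2n+1))`, and dropping the first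
term of the exponential series gives `∑ (-1)ⁿ / (n+1)! = 1 - e⁻¹`. The identity then holds termwise:
`(-1)ⁿ⁺¹ / ((n+1)! (2n+1)) = (-1)ⁿ / (n+1)! - 2 (-1)ⁿ / (n! (2n+1))`.
-/

open Real Nat Interval MeasureTheory

namespace Real

lemma hasSum_pow_div_factorial (x : ℝ) : HasSum (fun n : ℕ => x ^ n / n !) (exp x) := by
  rw [exp_eq_exp_ℝ]
  exact NormedSpace.expSeries_div_hasSum_exp x

lemma hasSum_pow_succ_div_factorial_succ (x : ℝ) :
    HasSum (fun n : ℕ => x ^ (n + 1) / (n + 1)!) (exp x - 1) := by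
  simpa using (hasSum_nat_add_iff' 1).mpr (hasSum_pow_div_factorial x)

lemma integral_neg_sq_pow_div_factorial (b : ℝ) (n : ℕ) :
    ∫ t in (0 : ℝ)..b, (-t ^ 2) ^ n / n ! = (-1) ^ n * b ^ (2 * n + 1) / (n ! * (2 * n + 1)) := by
  have h : ∀ t : ℝ, (-t ^ 2) ^ n / n ! = (-1) ^ n / n ! * t ^ (2 * n) := fun t => by
    rw [neg_pow, pow_mul]; ring
  simp_rw [h]
  rw [intervalIntegral.integral_const_mul, integral_pow, zero_pow (succ_ne_zero _), sub_zero]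
  push_cast
  field_simp

lemma hasSum_integral_exp_neg_sq (b : ℝ) :
    HasSum (fun n : ℕ => (-1) ^ n * b ^ (2 * n + 1) / (n ! * (2 * n + 1)))
      (∫ t in (0 : ℝ)..b, exp (-t ^ 2)) := by
  have bound_le : ∀ n : ℕ, ∀ t ∈ Ι 0 b, ‖(-t ^ 2) ^ n / (n ! : ℝ)‖ ≤ (b ^ 2) ^ n / n ! := by
    intro n t ht
    have : t ^ 2 ≤ b ^ 2 := by
      rcases Set.mem_uIoc.mp ht with h | h <;> nlinarith [h.1, h.2]
    rw [norm_div, norm_pow, norm_neg, Real.norm_of_nonneg (sq_nonneg t), RCLike.norm_natCast]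
    gcongr
  simpa only [integral_neg_sq_pow_div_factorial] using
    intervalIntegral.hasSum_integral_of_dominated_convergence (fun n _ => (b ^ 2) ^ n / n !)
      (fun n => by fun_prop) (fun n => .of_forall (bound_le n))
      (.of_forall fun _ _ => summable_pow_div_factorial _) (intervalIntegrable_const (μ := volume))
      (.of_forall fun t _ => hasSum_pow_div_factorial (-t ^ 2))

end Real

theorem series_identity :
    (∑' n : ℕ, (-1 : ℝ) ^ (n + 1) / (((n + 1).factorial : ℝ) * (2 * (n : ℝ) + 1))) =
      1 - Real.exp (-1) - 2 * ∫ t in (0:ℝ)..1, Real.exp (-t ^ 2) := by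
  have hexp : HasSum (fun n : ℕ => (-1 : ℝ) ^ n / (n + 1)!) (1 - exp (-1)) := by
    rw [← neg_sub]
    exact (hasSum_pow_succ_div_factorial_succ (-1)).neg.congr_fun fun n => by rw [pow_succ]; ring
  have hint := hasSum_integral_exp_neg_sq 1
  simp only [one_pow, mul_one] at hint
  refine ((hexp.sub (hint.mul_left 2)).congr_fun fun n => ?_).tsum_eq
  rw [factorial_succ]
  push_cast
  field_simp
  ring
end

section
/- Let pₙ*/qₙ* denote the nth convergent of the regular continued fraction expansion of e. Then ∑_{n≥0} |pₙ* − e·qₙ*| = ∑_{n≥0} 2^(2n+1) · n! / (2n+1)! − e. -/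
/-!
Write `J(a, b) = ∫₀¹ xᵃ (1 - x)ᵇ eˣ dx` (`expBeta a b`). The errors `βₙ = |pₙ - e qₙ|` of the continued fraction
`e = [2; 1, 2, 1, 1, 4, 1, 1, 6, …]` are `β₃ₖ = J(k, k+1)/k!`, `β₃ₖ₊₁ = J(k+1, k+1)/(k+1)!` and
`β₃ₖ₊₂ = J(k+2, k+1)/(k+1)!`: integration by parts shows that these numbers satisfy
`βₙ₋₁ = aₙ₊₁ βₙ + βₙ₊₁` for the partial quotients `aₙ` above, and a positive sequence with this
recursion determines both the continued fraction and its errors.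

Summed in blocks of three, the errors telescope to `2 ∑ₖ J(k, k)/k! - e`. Now
`∑ₖ J(k, k)/k! = ∫₀¹ e^{x(1-x)} eˣ dx = ∫₀¹ e^{2x-x²} dx`, and expanding `e^{2x-x²}` instead gives
`∑ₙ ∫₀¹ (2x - x²)ⁿ/n! dx = ∑ₙ 4ⁿ n!/(2n+1)!`.
-/

open Real

open intervalIntegral Nat

namespace GenContFract

theorem IntFractPair.of_intCast_add_s17 {K : Type*} [Field K] [LinearOrder K] [IsStrictOrderedRing K]
    [FloorRing K] (z : ℤ) {r : K} (h₀ : 0 ≤ r) (h₁ : r < 1) :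
    IntFractPair.of ((z : K) + r) = ⟨z, r⟩ := by
  have hr : ⌊r⌋ = 0 := Int.floor_eq_zero_iff.mpr ⟨h₀, h₁⟩
  simp [IntFractPair.of, Int.fract, hr]

/-- The recursion satisfied by the errors `β (n + 1) = |pₙ - ξ qₙ|` (with `p₋₁ = 1`, `q₋₁ = 0`)
of the continued fraction `ξ = [a 0; a 1, a 2, …]`. -/
structure IsErrorSeq (ξ : ℝ) (a : ℕ → ℤ) (β : ℕ → ℝ) : Prop where
  pos : ∀ n, 0 < β n
  zero : β 0 = 1
  one_le : ∀ n, 1 ≤ a (n + 1)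
  eq_add : ξ = a 0 + β 1
  eq_mul_add : ∀ n, β n = a (n + 1) * β (n + 1) + β (n + 2)

namespace IsErrorSeq

variable {ξ : ℝ} {a : ℕ → ℤ} {β : ℕ → ℝ}

theorem succ_lt (h : IsErrorSeq ξ a β) (n : ℕ) : β (n + 1) < β n := by
  have ha : (1 : ℝ) ≤ a (n + 1) := by exact_mod_cast h.one_le n
  nlinarith [h.eq_mul_add n, h.pos (n + 1), h.pos (n + 2)]

theorem stream_eq (h : IsErrorSeq ξ a β) (n : ℕ) :
    IntFractPair.stream ξ n = some ⟨a n, β (n + 1) / β n⟩ := by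
  induction n with
  | zero =>
    rw [IntFractPair.stream_zero, h.eq_add, h.zero, div_one,
      IntFractPair.of_intCast_add_s17 _ (h.pos 1).le (h.zero ▸ h.succ_lt 0)]
  | succ n ih =>
    have hpos := h.pos (n + 1)
    have hfr : β (n + 1) / β n ≠ 0 := (div_pos hpos (h.pos n)).ne'
    rw [IntFractPair.stream_succ_of_some ih hfr, inv_div]
    have hquot : β n / β (n + 1) = a (n + 1) + β (n + 2) / β (n + 1) := by
      rw [h.eq_mul_add n]
      field_simp
    rw [hquot, IntFractPair.of_intCast_add_s17 _ (div_pos (h.pos _) hpos).le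
      ((div_lt_one hpos).mpr (h.succ_lt _))]

theorem s_get? (h : IsErrorSeq ξ a β) (n : ℕ) :
    (GenContFract.of ξ).s.get? n = some ⟨1, a (n + 1)⟩ :=
  get?_of_eq_some_of_succ_get?_intFractPair_stream (h.stream_eq (n + 1))

theorem nums_sub_mul_dens (h : IsErrorSeq ξ a β) (n : ℕ) :
    (GenContFract.of ξ).nums n - ξ * (GenContFract.of ξ).dens n = (-1) ^ (n + 1) * β (n + 1) := by
  have hh : (GenContFract.of ξ).h = a 0 := by
    rw [GenContFract.of_h_eq_floor, h.eq_add, Int.floor_intCast_add, Int.floor_eq_zero_iff.mpr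
      ⟨(h.pos 1).le, h.zero ▸ h.succ_lt 0⟩, add_zero]
  induction n using Nat.twoStepInduction with
  | zero => rw [zeroth_num_eq_h, zeroth_den_eq_one, hh, h.eq_add]; ring
  | one =>
    rw [first_num_eq (h.s_get? 0), first_den_eq (h.s_get? 0), hh, h.eq_add]
    linear_combination h.eq_mul_add 0 - h.zero
  | more n ih₀ ih₁ =>
    rw [nums_recurrence (h.s_get? (n + 1)) rfl rfl, dens_recurrence (h.s_get? (n + 1)) rfl rfl]
    linear_combination (a (n + 2) : ℝ) * ih₁ + ih₀ + (-1) ^ (n + 1) * h.eq_mul_add (n + 1)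

end IsErrorSeq

end GenContFract

theorem hasSum_of_hasSum_sum_fin_of_nonneg {f : ℕ → ℝ} (hf : ∀ n, 0 ≤ f n) (N : ℕ) [NeZero N]
    {s : ℝ} (h : HasSum (fun k => ∑ j : Fin N, f (k * N + j)) s) : HasSum f s := by
  rw [← (Nat.divModEquiv N).symm.hasSum_iff]
  have hs : Summable (f ∘ (Nat.divModEquiv N).symm) :=
    (summable_prod_of_nonneg fun _ => hf _).2
      ⟨fun _ => (hasSum_fintype _).summable, by simpa [tsum_fintype] using h.summable⟩
  obtain ⟨t, ht⟩ := hs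
  rwa [(ht.prod_fiberwise fun k => hasSum_fintype _).unique h] at ht

theorem hasSum_integral_pow_div_factorial_mul {g w : ℝ → ℝ} (hg : Continuous g)
    (hw : Continuous w) (a b : ℝ) :
    HasSum (fun n => ∫ x in a..b, g x ^ n / n ! * w x) (∫ x in a..b, exp (g x) * w x) := by
  obtain ⟨M, hM⟩ := (isCompact_uIcc (a := a) (b := b)).exists_bound_of_continuousOn hg.continuousOn
  obtain ⟨W, hW⟩ := (isCompact_uIcc (a := a) (b := b)).exists_bound_of_continuousOn hw.continuousOn
  refine hasSum_integral_of_dominated_convergence (fun n _ => M ^ n / n ! * W)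
    (fun n => by fun_prop) (fun n => ?_) ?_ intervalIntegrable_const ?_
  · refine Filter.Eventually.of_forall fun x hx => ?_
    have hx' := Set.uIoc_subset_uIcc hx
    have hM₀ : 0 ≤ M := (norm_nonneg _).trans (hM x hx')
    rw [norm_mul, norm_div, norm_pow, norm_natCast]
    gcongr
    exacts [hM x hx', hW x hx']
  · exact Filter.Eventually.of_forall fun _ _ =>
      (NormedSpace.expSeries_div_summable M).mul_right W
  · refine Filter.Eventually.of_forall fun x _ => ?_
    rw [exp_eq_exp_ℝ]
    exact (NormedSpace.expSeries_div_hasSum_exp (g x)).mul_right (w x)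

noncomputable def expBeta (a b : ℕ) : ℝ := ∫ x in (0 : ℝ)..1, x ^ a * (1 - x) ^ b * exp x

theorem intervalIntegrable_expBeta_integrand (a b : ℕ) :
    IntervalIntegrable (fun x : ℝ => x ^ a * (1 - x) ^ b * exp x) MeasureTheory.volume 0 1 :=
  (by fun_prop : Continuous fun x : ℝ => x ^ a * (1 - x) ^ b * exp x).intervalIntegrable _ _

theorem expBeta_pos (a b : ℕ) : 0 < expBeta a b := by
  refine intervalIntegral_pos_of_pos_on (intervalIntegrable_expBeta_integrand a b)
    (fun x hx => ?_) one_pos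
  exact mul_pos (mul_pos (pow_pos hx.1 a) (pow_pos (sub_pos.mpr hx.2) b)) (exp_pos x)

theorem expBeta_succ_right (a b : ℕ) : expBeta a (b + 1) = expBeta a b - expBeta (a + 1) b := by
  rw [expBeta, expBeta, expBeta, ← integral_sub (intervalIntegrable_expBeta_integrand a b)
    (intervalIntegrable_expBeta_integrand (a + 1) b)]
  exact integral_congr fun x _ => by ring

theorem expBeta_zero_zero : expBeta 0 0 = exp 1 - 1 := by simp [expBeta]

theorem expBeta_one_zero : expBeta 1 0 = 1 := by
  have hderiv (x : ℝ) : HasDerivAt (fun y => (y - 1) * exp y) (x ^ 1 * (1 - x) ^ 0 * exp x) x := by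
    refine (((hasDerivAt_id' x).sub_const 1).mul (hasDerivAt_exp x)).congr_deriv ?_
    ring
  rw [expBeta, integral_eq_sub_of_hasDerivAt (fun x _ => hderiv x)
    (intervalIntegrable_expBeta_integrand 1 0)]
  simp

theorem expBeta_integration_by_parts (a b : ℕ) :
    (a + 1) * expBeta a (b + 1) + expBeta (a + 1) (b + 1) = (b + 1) * expBeta (a + 1) b := by
  have hderiv (x : ℝ) : HasDerivAt (fun y => y ^ (a + 1) * (1 - y) ^ (b + 1) * exp y)
      ((a + 1) * (x ^ a * (1 - x) ^ (b + 1) * exp x) - (b + 1) * (x ^ (a + 1) * (1 - x) ^ b * exp x)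
        + x ^ (a + 1) * (1 - x) ^ (b + 1) * exp x) x := by
    have h₁ : HasDerivAt (fun y => y ^ (a + 1)) ((a + 1) * x ^ a) x := by
      simpa using hasDerivAt_pow (a + 1) x
    have h₂ : HasDerivAt (fun y => (1 - y) ^ (b + 1)) (-((b + 1) * (1 - x) ^ b)) x := by
      refine ((hasDerivAt_pow (b + 1) (1 - x)).comp x
        ((hasDerivAt_id' x).const_sub 1)).congr_deriv ?_
      push_cast
      ring
    refine ((h₁.mul h₂).mul (hasDerivAt_exp x)).congr_deriv ?_
    simp only [Pi.mul_apply]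
    ring
  have hI₁ := (intervalIntegrable_expBeta_integrand a (b + 1)).const_mul ((a : ℝ) + 1)
  have hI₂ := (intervalIntegrable_expBeta_integrand (a + 1) b).const_mul ((b : ℝ) + 1)
  have hI₃ := intervalIntegrable_expBeta_integrand (a + 1) (b + 1)
  have hftc := integral_eq_sub_of_hasDerivAt (fun x _ => hderiv x) ((hI₁.sub hI₂).add hI₃)
  rw [integral_add (hI₁.sub hI₂) hI₃, integral_sub hI₁ hI₂, integral_const_mul,
    integral_const_mul] at hftc
  simp only [one_pow, sub_self, zero_pow (succ_ne_zero _), mul_zero, zero_mul, sub_zero] at hftc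
  rw [expBeta, expBeta, expBeta]
  linarith

def eQuot (m : ℕ) : ℤ := if m = 0 then 2 else if m % 3 = 2 then 2 * (m / 3 + 1) else 1

/-- `eErr m = |pₘ₋₁ - e qₘ₋₁|`, with `p₋₁ = 1` and `q₋₁ = 0`. -/
noncomputable def eErr (m : ℕ) : ℝ :=
  if m % 3 = 0 then expBeta (m / 3 + 1) (m / 3) / (m / 3)!
  else if m % 3 = 1 then expBeta (m / 3) (m / 3 + 1) / (m / 3)!
  else expBeta (m / 3 + 1) (m / 3 + 1) / (m / 3 + 1)!

theorem eQuot_three_mul_add_one (k : ℕ) : eQuot (3 * k + 1) = 1 := by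
  simp [eQuot]

theorem eQuot_three_mul_add_two (k : ℕ) : eQuot (3 * k + 2) = 2 * (k + 1) := by
  rw [eQuot, if_neg (by omega), if_pos (by omega)]
  omega

theorem eQuot_three_mul_add_three (k : ℕ) : eQuot (3 * k + 3) = 1 := by
  simp [eQuot]

theorem eErr_three_mul (k : ℕ) : eErr (3 * k) = expBeta (k + 1) k / k ! := by
  simp [eErr, show 3 * k / 3 = k by omega]

theorem eErr_three_mul_add_one (k : ℕ) : eErr (3 * k + 1) = expBeta k (k + 1) / k ! := by
  simp [eErr, show (3 * k + 1) % 3 = 1 by omega, show (3 * k + 1) / 3 = k by omega]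

theorem eErr_three_mul_add_two (k : ℕ) :
    eErr (3 * k + 2) = expBeta (k + 1) (k + 1) / (k + 1)! := by
  simp [eErr, show (3 * k + 2) % 3 = 2 by omega, show (3 * k + 2) / 3 = k by omega]

theorem eErr_pos (m : ℕ) : 0 < eErr m := by
  unfold eErr
  split_ifs <;> exact div_pos (expBeta_pos _ _) (by positivity)

theorem eErr_eq_mul_add (m : ℕ) : eErr m = eQuot (m + 1) * eErr (m + 1) + eErr (m + 2) := by
  obtain ⟨k, rfl | rfl | rfl⟩ : ∃ k, m = 3 * k ∨ m = 3 * k + 1 ∨ m = 3 * k + 2 :=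
    ⟨m / 3, by omega⟩
  · rw [eQuot_three_mul_add_one, eErr_three_mul, eErr_three_mul_add_one,
      eErr_three_mul_add_two, factorial_succ]
    have := expBeta_integration_by_parts k k
    push_cast
    field_simp
    linear_combination -this
  · rw [eQuot_three_mul_add_two, eErr_three_mul_add_one, eErr_three_mul_add_two,
      show 3 * k + 1 + 2 = 3 * (k + 1) by ring, eErr_three_mul, factorial_succ]
    have := expBeta_integration_by_parts k (k + 1)
    push_cast at this ⊢
    field_simp
    linear_combination
      this - (k + 1) * expBeta_succ_right k (k + 1) - expBeta_succ_right (k + 1) (k + 1)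
  · rw [eQuot_three_mul_add_three, show 3 * k + 2 + 1 = 3 * (k + 1) by ring, eErr_three_mul,
      show 3 * k + 2 + 2 = 3 * (k + 1) + 1 by ring, eErr_three_mul_add_one, eErr_three_mul_add_two,
      expBeta_succ_right (k + 1) (k + 1)]
    push_cast
    ring

theorem isErrorSeq_exp_one : GenContFract.IsErrorSeq (exp 1) eQuot eErr where
  pos := eErr_pos
  zero := by simpa [expBeta_one_zero] using eErr_three_mul 0
  one_le n := by unfold eQuot; split_ifs <;> omega
  eq_add := by
    rw [show (1 : ℕ) = 3 * 0 + 1 from rfl, eErr_three_mul_add_one, expBeta_succ_right,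
      expBeta_zero_zero, expBeta_one_zero]
    simp only [eQuot, if_pos, factorial_zero, cast_one, div_one]
    push_cast
    ring
  eq_mul_add := eErr_eq_mul_add

theorem integral_two_mul_sub_sq_pow_succ (n : ℕ) :
    (2 * n + 3 : ℝ) * ∫ x in (0 : ℝ)..1, (2 * x - x ^ 2) ^ (n + 1)
      = 2 * (n + 1 : ℝ) * ∫ x in (0 : ℝ)..1, (2 * x - x ^ 2) ^ n := by
  have hderiv (x : ℝ) : HasDerivAt (fun y => (y - 1) * (2 * y - y ^ 2) ^ (n + 1))
      ((2 * n + 3) * (2 * x - x ^ 2) ^ (n + 1) - 2 * (n + 1) * (2 * x - x ^ 2) ^ n) x := by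
    have hq : HasDerivAt (fun y => 2 * y - y ^ 2) (2 - 2 * x) x := by
      refine (((hasDerivAt_id' x).const_mul 2).sub (hasDerivAt_pow 2 x)).congr_deriv ?_
      norm_num
    refine (((hasDerivAt_id' x).sub_const 1).mul (hq.pow (n + 1))).congr_deriv ?_
    simp only [Pi.pow_apply]
    push_cast
    ring
  have hI (m : ℕ) :
      IntervalIntegrable (fun x : ℝ => (2 * x - x ^ 2) ^ m) MeasureTheory.volume 0 1 :=
    (by fun_prop : Continuous fun x : ℝ => (2 * x - x ^ 2) ^ m).intervalIntegrable _ _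
  have hftc := integral_eq_sub_of_hasDerivAt (fun x _ => hderiv x)
    (((hI (n + 1)).const_mul _).sub ((hI n).const_mul _))
  rw [integral_sub ((hI (n + 1)).const_mul _) ((hI n).const_mul _), integral_const_mul,
    integral_const_mul] at hftc
  norm_num at hftc
  linarith

theorem integral_two_mul_sub_sq_pow (n : ℕ) :
    ∫ x in (0 : ℝ)..1, (2 * x - x ^ 2) ^ n = 4 ^ n * (n ! : ℝ) ^ 2 / (2 * n + 1)! := by
  induction n with
  | zero => simp
  | succ n ih =>
    have h := integral_two_mul_sub_sq_pow_succ n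
    rw [mul_comm, ih] at h
    rw [eq_div_of_mul_eq (by positivity) h, show 2 * (n + 1) + 1 = 2 * n + 1 + 1 + 1 by ring,
      factorial_succ (2 * n + 1 + 1), factorial_succ (2 * n + 1), factorial_succ n]
    push_cast
    field_simp
    ring

theorem hasSum_two_pow_mul_factorial_div_factorial :
    HasSum (fun n : ℕ => (2 : ℝ) ^ (2 * n + 1) * n ! / (2 * n + 1)!)
      (2 * ∫ x in (0 : ℝ)..1, exp (2 * x - x ^ 2)) := by
  have hterm (n : ℕ) : (2 : ℝ) ^ (2 * n + 1) * n ! / (2 * n + 1)!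
      = 2 * ∫ x in (0 : ℝ)..1, (2 * x - x ^ 2) ^ n / n ! * 1 := by
    simp only [mul_one]
    rw [integral_div, integral_two_mul_sub_sq_pow, pow_succ, pow_mul]
    field_simp
    norm_num
  simp only [hterm]
  simpa using (hasSum_integral_pow_div_factorial_mul (g := fun x => 2 * x - x ^ 2)
    (w := fun _ => 1) (by fun_prop) continuous_const 0 1).mul_left 2

theorem hasSum_expBeta_diag :
    HasSum (fun k => expBeta k k / k !) (∫ x in (0 : ℝ)..1, exp (2 * x - x ^ 2)) := by
  convert hasSum_integral_pow_div_factorial_mul (g := fun x => x * (1 - x)) (w := exp)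
    (by fun_prop) continuous_exp 0 1 using 1
  · ext k
    rw [expBeta, ← integral_div]
    exact integral_congr fun x _ => by simp only [mul_pow]; ring
  · exact integral_congr fun x _ => by simp only [← exp_add]; ring_nf

theorem summable_expBeta_succ_diag : Summable fun k => expBeta (k + 1) k / k ! := by
  refine hasSum_expBeta_diag.summable.of_nonneg_of_le (fun k => ?_) (fun k => ?_)
  · exact div_nonneg (expBeta_pos _ _).le (by positivity)
  · gcongr
    linarith [expBeta_succ_right k k, expBeta_pos k (k + 1)]

theorem sum_eErr_block (k : ℕ) : ∑ j : Fin 3, eErr (k * 3 + j + 1) =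
    expBeta k k / k ! + expBeta (k + 1) (k + 1) / (k + 1)!
      + (expBeta (k + 2) (k + 1) / (k + 1)! - expBeta (k + 1) k / k !) := by
  rw [Fin.sum_univ_three]
  simp only [Fin.val_zero, Fin.val_one, Fin.val_two]
  rw [show k * 3 + 2 + 1 = 3 * (k + 1) by ring, show k * 3 + 1 + 1 = 3 * k + 2 by ring,
    show k * 3 + 0 + 1 = 3 * k + 1 by ring, eErr_three_mul_add_one, eErr_three_mul_add_two,
    eErr_three_mul, expBeta_succ_right]
  ring

theorem hasSum_eErr_succ :
    HasSum (fun m => eErr (m + 1)) (2 * (∫ x in (0 : ℝ)..1, exp (2 * x - x ^ 2)) - exp 1) := by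
  refine hasSum_of_hasSum_sum_fin_of_nonneg (fun m => (eErr_pos _).le) 3 ?_
  simp only [sum_eErr_block]
  have hA := hasSum_expBeta_diag
  have hB := summable_expBeta_succ_diag.hasSum
  convert (hA.add ((hasSum_nat_add_iff' 1).2 hA)).add (((hasSum_nat_add_iff' 1).2 hB).sub hB)
    using 1
  simp only [Finset.sum_range_one, zero_add, expBeta_zero_zero, expBeta_one_zero, factorial_zero,
    cast_one, div_one]
  ring

theorem errorSum_e_pos_series :
    (∑' n : ℕ, |cfNum (Real.exp 1) n - Real.exp 1 * cfDen (Real.exp 1) n|) =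
      (∑' n : ℕ, (2 : ℝ) ^ (2 * n + 1) * (n.factorial : ℝ) / ((2 * n + 1).factorial : ℝ))
        - Real.exp 1 := by
  have herr (n : ℕ) : |cfNum (exp 1) n - exp 1 * cfDen (exp 1) n| = eErr (n + 1) := by
    rw [cfNum, cfDen, isErrorSeq_exp_one.nums_sub_mul_dens, abs_mul, abs_neg_one_pow, one_mul,
      abs_of_pos (eErr_pos _)]
  rw [tsum_congr herr, hasSum_eErr_succ.tsum_eq,
    hasSum_two_pow_mul_factorial_div_factorial.tsum_eq]
end
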